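/- arXiv:2108.05200 — 13 statements merged into one kernel-verified Lean document; each statement's English description precedes it below -/
import Mathlib

section
/- Let (S,·) be a discrete semigroup and 𝓕 a family of subsets of S with the Ramsey property. Then β(𝓕) = {p ∈ βS : p ⊆ 𝓕} is a left ideal of the semigroup (βS, ·) if and only if 𝓕 is left shift-invariant, i.e., for all s ∈ S and E ∈ 𝓕, one has sE ∈ 𝓕. -/
open Set

attribute [local instance] Ultrafilter.mul Ultrafilter.semigroup

theorem exists_ultra_sub {S : Type*} (F : Set (Set S)) (h0 : ∅ ∉ F)
    (hup : ∀ A ∈ F, ∀ B : Set S, A ⊆ B → B ∈ F)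
    (hram : ∀ A ∈ F, ∀ A₁ A₂ : Set S, A = A₁ ∪ A₂ → A₁ ∈ F ∨ A₂ ∈ F)
    (E : Set S) (hE : E ∈ F) :
    ∃ p : Ultrafilter S, E ∈ p ∧ ∀ A ∈ p, A ∈ F := by
  let G : Filter S :=
    { sets := {A | Aᶜ ∉ F}
      univ_sets := by simpa using h0
      sets_of_superset := by
        intro A B hA hAB hB
        exact hA (hup Bᶜ hB Aᶜ (Set.compl_subset_compl.2 hAB))
      inter_sets := by
        intro A B hA hB hAB
        rcases hram _ hAB Aᶜ Bᶜ (Set.compl_inter A B) with h | h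
        · exact hA h
        · exact hB h }
  have hGE : (G ⊓ Filter.principal E).NeBot := by
    rw [Filter.inf_principal_neBot_iff]
    intro U hU
    by_contra h
    have hsub : E ⊆ Uᶜ := fun x hx hxU => h ⟨x, hxU, hx⟩
    exact hU (hup E hE Uᶜ hsub)
  obtain ⟨p, hp⟩ := Ultrafilter.exists_le (G ⊓ Filter.principal E)
  refine ⟨p, ?_, ?_⟩
  · exact hp (Filter.mem_inf_of_right (Filter.mem_principal_self E))
  · intro A hA
    by_contra hAF
    have hG : Aᶜ ∈ G := by
      simp only [G, Filter.mem_mk, Set.mem_setOf_eq, compl_compl]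
      exact hAF
    have : Aᶜ ∈ p := hp (Filter.mem_inf_of_left hG)
    exact absurd hA (Ultrafilter.compl_mem_iff_notMem.mp this)

/-- For a Ramsey family 𝓕 on a discrete semigroup S, β(𝓕) is a left ideal of
(βS, ·) iff 𝓕 is left shift-invariant (sE ∈ 𝓕 for all s ∈ S, E ∈ 𝓕). -/
theorem betaF_left_ideal_iff {S : Type*} [Semigroup S] (F : Set (Set S))
    (hne : F.Nonempty) (h0 : ∅ ∉ F)
    (hup : ∀ A ∈ F, ∀ B : Set S, A ⊆ B → B ∈ F)
    (hram : ∀ A ∈ F, ∀ A₁ A₂ : Set S, A = A₁ ∪ A₂ → A₁ ∈ F ∨ A₂ ∈ F) :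
    ({p : Ultrafilter S | ∀ A ∈ p, A ∈ F}.Nonempty ∧
      ∀ p : Ultrafilter S, ∀ q ∈ {p : Ultrafilter S | ∀ A ∈ p, A ∈ F},
        p * q ∈ {p : Ultrafilter S | ∀ A ∈ p, A ∈ F}) ↔
    (∀ s : S, ∀ E ∈ F, (fun t => s * t) '' E ∈ F) := by
  have huniv : (Set.univ : Set S) ∈ F := by
    obtain ⟨A, hA⟩ := hne
    exact hup A hA Set.univ (Set.subset_univ A)
  constructor
  · rintro ⟨-, hideal⟩ s E hE
    obtain ⟨q, hEq, hq⟩ := exists_ultra_sub F h0 hup hram E hE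
    have hmem : ((fun t => s * t) '' E) ∈ (pure s : Ultrafilter S) * q := by
      have : ∀ᶠ m in (pure s : Ultrafilter S), ∀ᶠ m' in (q : Filter S),
          m * m' ∈ (fun t => s * t) '' E := by
        simp only [Ultrafilter.coe_pure, Filter.eventually_pure]
        filter_upwards [hEq] with m' hm'
        exact ⟨m', hm', rfl⟩
      exact (Ultrafilter.eventually_mul _ _ _).2 this
    exact hideal (pure s) q hq _ hmem
  · intro hshift
    constructor
    · obtain ⟨p, -, hp⟩ := exists_ultra_sub F h0 hup hram Set.univ huniv
      exact ⟨p, hp⟩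
    · intro p q hq A hA
      have := (Ultrafilter.eventually_mul p q (· ∈ A)).1 hA
      obtain ⟨s, hs⟩ := Ultrafilter.nonempty_of_mem (Filter.eventually_iff.1 this)
      have h1 : {m' | s * m' ∈ A} ∈ F := hq _ hs
      have h2 : (fun t => s * t) '' {m' | s * m' ∈ A} ∈ F := hshift s _ h1
      refine hup _ h2 A ?_
      rintro x ⟨y, hy, rfl⟩
      exact hy
end

section
/- Let S be a semigroup and 𝓕 a family of subsets of S with the Ramsey property. Then β(𝓕) = {p ∈ βS : p ⊆ 𝓕} is a subsemigroup of (βS,·) if and only if 𝓕 satisfies: for every E ⊆ S, if there exists A ∈ 𝓕 such that for every finite H ⊆ A the set ⋂_{x ∈ H} x⁻¹E belongs to 𝓕, then E ∈ 𝓕. -/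
open Set Filter

attribute [local instance] Ultrafilter.mul Ultrafilter.semigroup

/-!
An ultrafilter lies in `F` exactly when it refines the filter of sets whose complement is not in
`F`, so every filter all of whose members lie in `F` extends to an ultrafilter contained in `F`.
If `β(F)` is closed under products and `A ∈ F` has all finite intersections of the `x⁻¹E`,
`x ∈ A`, in `F`, extend the principal filter of `A` to `p` and the filter generated by these
`x⁻¹E` to `q`; then `E ∈ p * q`, hence `E ∈ F`. Conversely, if `A ∈ p * q` then
`{x | x⁻¹A ∈ q}` is a member of `p`, hence of `F`, whose finite intersections of the `x⁻¹A` lie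
in `q`, hence in `F`.
-/

theorem Filter.mem_generate_image_iff {ι α : Type*} {f : ι → Set α} {A : Set ι} {U : Set α} :
    U ∈ generate (f '' A) ↔ ∃ H ⊆ A, H.Finite ∧ ⋂ i ∈ H, f i ⊆ U := by
  rw [mem_generate_iff, exists_subset_image_finite_and]
  simp only [sInter_image]

structure IsPartitionRegular {S : Type*} (F : Set (Set S)) : Prop where
  empty_notMem : ∅ ∉ F
  mem_of_subset : ∀ A ∈ F, ∀ B, A ⊆ B → B ∈ F
  mem_or_mem_of_union_mem : ∀ A₁ A₂, A₁ ∪ A₂ ∈ F → A₁ ∈ F ∨ A₂ ∈ F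

namespace IsPartitionRegular

variable {S : Type*} {F : Set (Set S)}

def dualFilter (hF : IsPartitionRegular F) : Filter S :=
  comk (· ∉ F) hF.empty_notMem (fun _ ht _ hst hs => ht (hF.mem_of_subset _ hs _ hst))
    (fun _ hs _ ht hst => (hF.mem_or_mem_of_union_mem _ _ hst).elim hs ht)

theorem forall_mem_of_le_dualFilter (hF : IsPartitionRegular F) {p : Ultrafilter S}
    (hp : ↑p ≤ hF.dualFilter) :
    ∀ B ∈ p, B ∈ F := by
  intro B hB
  by_contra hBF
  have hcompl : Bᶜ ∈ p := hp (by simpa [dualFilter] using hBF)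
  exact Ultrafilter.compl_mem_iff_notMem.mp hcompl hB

theorem exists_ultrafilter_le (hF : IsPartitionRegular F) {f : Filter S} (hf : ∀ s ∈ f, s ∈ F) :
    ∃ p : Ultrafilter S, ↑p ≤ f ∧ ∀ B ∈ p, B ∈ F := by
  have : (f ⊓ hF.dualFilter).NeBot := by
    refine inf_neBot_iff.mpr fun s hs t ht => ?_
    by_contra hst
    have hsub : s ⊆ tᶜ := fun x hxs hxt => hst ⟨x, hxs, hxt⟩
    exact ht (hF.mem_of_subset s (hf s hs) _ hsub)
  have hle : ↑(Ultrafilter.of (f ⊓ hF.dualFilter)) ≤ f ⊓ hF.dualFilter := Ultrafilter.of_le _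
  exact ⟨_, hle.trans inf_le_left, hF.forall_mem_of_le_dualFilter (hle.trans inf_le_right)⟩

theorem mem_of_ultrafilter_mul_closed [Semigroup S] (hF : IsPartitionRegular F)
    (hmul : ∀ p q : Ultrafilter S, (∀ A ∈ p, A ∈ F) → (∀ A ∈ q, A ∈ F) → ∀ A ∈ p * q, A ∈ F)
    {A E : Set S} (hA : A ∈ F)
    (hE : ∀ H ⊆ A, H.Finite → (⋂ x ∈ H, {y : S | x * y ∈ E}) ∈ F) : E ∈ F := by
  obtain ⟨p, hpA, hpF⟩ := hF.exists_ultrafilter_le (f := 𝓟 A)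
    fun s hs => hF.mem_of_subset A hA s hs
  obtain ⟨q, hqE, hqF⟩ := hF.exists_ultrafilter_le
    (f := generate ((fun x => {y : S | x * y ∈ E}) '' A)) fun s hs => by
      obtain ⟨H, hHA, hHfin, hHs⟩ := mem_generate_image_iff.mp hs
      exact hF.mem_of_subset _ (hE H hHA hHfin) s hHs
  refine hmul p q hpF hqF E ?_
  change ∀ᶠ m in ↑(p * q), m ∈ E
  rw [Ultrafilter.eventually_mul]
  filter_upwards [hpA (mem_principal_self A)] with x hx
  exact hqE (mem_generate_of_mem (mem_image_of_mem _ hx))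

end IsPartitionRegular

theorem betaF_subsemigroup_iff_general {S : Type*} [Semigroup S] (F : Set (Set S))
    (h0 : ∅ ∉ F)
    (hup : ∀ A ∈ F, ∀ B : Set S, A ⊆ B → B ∈ F)
    (hram : ∀ A ∈ F, ∀ A₁ A₂ : Set S, A = A₁ ∪ A₂ → A₁ ∈ F ∨ A₂ ∈ F) :
    (∀ p q : Ultrafilter S, (∀ A ∈ p, A ∈ F) → (∀ A ∈ q, A ∈ F) →
        ∀ A ∈ p * q, A ∈ F) ↔
    (∀ E : Set S, (∃ A ∈ F, ∀ H : Set S, H ⊆ A → H.Finite →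
        (⋂ x ∈ H, {y : S | x * y ∈ E}) ∈ F) → E ∈ F) := by
  have hF : IsPartitionRegular F := ⟨h0, hup, fun A₁ A₂ h => hram _ h A₁ A₂ rfl⟩
  refine ⟨fun hmul E ⟨A, hA, hE⟩ => hF.mem_of_ultrafilter_mul_closed hmul hA hE, ?_⟩
  intro hcond p q hp hq A hA
  have hB : {x | {y | x * y ∈ A} ∈ q} ∈ p := (Ultrafilter.eventually_mul p q (· ∈ A)).mp hA
  exact hcond A ⟨_, hp _ hB, fun H hHB hHfin =>
    hq _ ((biInter_mem hHfin).mpr fun x hx => hHB hx)⟩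

/-- β(𝓕) is a subsemigroup of βS iff 𝓕 satisfies: whenever E ⊆ S and there is
A ∈ 𝓕 such that ⋂_{x ∈ H} x⁻¹E ∈ 𝓕 for every finite H ⊆ A, then E ∈ 𝓕. -/
theorem betaF_subsemigroup_iff {S : Type*} [Semigroup S] (F : Set (Set S))
    (hne : F.Nonempty) (h0 : ∅ ∉ F)
    (hup : ∀ A ∈ F, ∀ B : Set S, A ⊆ B → B ∈ F)
    (hram : ∀ A ∈ F, ∀ A₁ A₂ : Set S, A = A₁ ∪ A₂ → A₁ ∈ F ∨ A₂ ∈ F) :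
    (∀ p q : Ultrafilter S, (∀ A ∈ p, A ∈ F) → (∀ A ∈ q, A ∈ F) →
        ∀ A ∈ p * q, A ∈ F) ↔
    (∀ E : Set S, (∃ A ∈ F, ∀ H : Set S, H ⊆ A → H.Finite →
        (⋂ x ∈ H, {y : S | x * y ∈ E}) ∈ F) → E ∈ F) :=
  betaF_subsemigroup_iff_general F h0 hup hram
end

section
/- Let S be a discrete semigroup and p ∈ βS an ultrafilter. Then p is an idempotent (p·p = p) if and only if for each A ∈ p there is a nonempty set T of functions, each with domain some n ∈ ω and range contained in A, such that: (a) for all f ∈ T, B_f(T) = {x : f⌢x ∈ T} ∈ p; and (b) for all f ∈ T and all x ∈ B_f(T), B_{f⌢x}(T) ⊆ x⁻¹ B_f(T). -/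
open Set

attribute [local instance] Ultrafilter.mul Ultrafilter.semigroup

section Aux

variable {S : Type*} [Semigroup S]

/-- The "star" of a set with respect to an ultrafilter. -/
def pstar (p : Ultrafilter S) (B : Set S) : Set S :=
  {x | x ∈ B ∧ {y | x * y ∈ B} ∈ p}

lemma pstar_subset (p : Ultrafilter S) (B : Set S) : pstar p B ⊆ B := fun _ hx => hx.1

lemma mem_mul_self {p : Ultrafilter S} {B : Set S} :
    B ∈ p * p ↔ {x | {y | x * y ∈ B} ∈ p} ∈ p := by
  have := Ultrafilter.eventually_mul p p (· ∈ B)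
  simpa [Filter.Eventually] using this

lemma pstar_mem {p : Ultrafilter S} (hp : p * p = p) {B : Set S} (hB : B ∈ p) :
    pstar p B ∈ p := by
  have h2 : {x | {y | x * y ∈ B} ∈ p} ∈ p := by
    rw [← mem_mul_self, hp]; exact hB
  exact Filter.inter_mem hB h2

/-- A set is "good" if it's in p and every shift by a member is in p. -/
def StarP (p : Ultrafilter S) (B : Set S) : Prop :=
  B ∈ p ∧ ∀ x ∈ B, {y | x * y ∈ B} ∈ p

lemma pstar_shift {p : Ultrafilter S} {B : Set S} {x : S} (hx : x ∈ pstar p B) :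
    pstar p {y | x * y ∈ B} ⊆ {y | x * y ∈ pstar p B} := by
  rintro y ⟨hy1, hy2⟩
  refine ⟨hy1, ?_⟩
  have : {z | y * z ∈ {w | x * w ∈ B}} = {z | x * y * z ∈ B} := by
    ext z; simp [mul_assoc]
  rwa [this] at hy2

lemma starP_pstar {p : Ultrafilter S} (hp : p * p = p) {B : Set S} (hB : B ∈ p) :
    StarP p (pstar p B) := by
  refine ⟨pstar_mem hp hB, fun x hx => ?_⟩
  exact Filter.mem_of_superset (pstar_mem hp hx.2) (pstar_shift hx)

lemma starP_inter {p : Ultrafilter S} {B C : Set S} (hB : StarP p B) (hC : StarP p C) :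
    StarP p (B ∩ C) := by
  refine ⟨Filter.inter_mem hB.1 hC.1, fun x hx => ?_⟩
  have : {y | x * y ∈ B ∩ C} = {y | x * y ∈ B} ∩ {y | x * y ∈ C} := rfl
  rw [this]
  exact Filter.inter_mem (hB.2 x hx.1) (hC.2 x hx.2)

/-- The recursively defined sets along a (reversed) sequence. -/
def Dset (p : Ultrafilter S) (A : Set S) : List S → Set S
  | [] => pstar p A
  | x :: g => pstar p A ∩ pstar p {y | x * y ∈ Dset p A g}

/-- A (reversed) sequence is good. -/
def Good (p : Ultrafilter S) (A : Set S) : List S → Prop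
  | [] => True
  | x :: g => x ∈ Dset p A g ∧ Good p A g

lemma Dset_subset (p : Ultrafilter S) (A : Set S) (g : List S) : Dset p A g ⊆ A := by
  cases g with
  | nil => exact pstar_subset p A
  | cons x g => exact fun y hy => pstar_subset p A hy.1

lemma good_starP {p : Ultrafilter S} (hp : p * p = p) {A : Set S} (hA : A ∈ p) :
    ∀ g : List S, Good p A g → StarP p (Dset p A g) := by
  intro g
  induction g with
  | nil => intro _; exact starP_pstar hp hA
  | cons x g ih =>
    rintro ⟨hx, hg⟩
    have hDg := ih hg
    exact starP_inter (starP_pstar hp hA) (starP_pstar hp (hDg.2 x hx))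

lemma good_mem_A {p : Ultrafilter S} {A : Set S} :
    ∀ g : List S, Good p A g → ∀ a ∈ g, a ∈ A := by
  intro g
  induction g with
  | nil => intro _ a ha; simp at ha
  | cons x g ih =>
    rintro ⟨hx, hg⟩ a ha
    rcases List.mem_cons.1 ha with rfl | ha
    · exact Dset_subset p A g hx
    · exact ih hg a ha

end Aux

/-- p ∈ βS is idempotent iff for each A ∈ p there is a nonempty set T of finite
sequences (modelled as lists) with values in A such that B_f(T) = {x : f⌢x ∈ T} ∈ p for all
f ∈ T, and B_{f⌢x}(T) ⊆ x⁻¹B_f(T) for all f ∈ T, x ∈ B_f(T). -/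
theorem idempotent_iff_trees {S : Type*} [Semigroup S] (p : Ultrafilter S) :
    p * p = p ↔
      ∀ A ∈ p, ∃ T : Set (List S), T.Nonempty ∧
        (∀ f ∈ T, ∀ a ∈ f, a ∈ A) ∧
        (∀ f ∈ T, {x : S | f ++ [x] ∈ T} ∈ p) ∧
        (∀ f ∈ T, ∀ x ∈ {x : S | f ++ [x] ∈ T},
          {y : S | (f ++ [x]) ++ [y] ∈ T} ⊆ {y : S | x * y ∈ {x : S | f ++ [x] ∈ T}}) := by
  constructor
  · intro hp A hA
    refine ⟨{f | Good p A f.reverse}, ⟨[], trivial⟩, ?_, ?_, ?_⟩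
    · intro f hf a ha
      exact good_mem_A f.reverse hf a (List.mem_reverse.2 ha)
    · intro f hf
      have : {x : S | f ++ [x] ∈ {f | Good p A f.reverse}} = Dset p A f.reverse := by
        ext x
        simp only [mem_setOf_eq, List.reverse_append, List.reverse_cons, List.reverse_nil,
          List.nil_append, List.singleton_append]
        exact ⟨fun h => h.1, fun h => ⟨h, hf⟩⟩
      rw [this]
      exact (good_starP hp hA f.reverse hf).1
    · intro f hf x hx y hy
      simp only [mem_setOf_eq, List.reverse_append, List.reverse_cons, List.reverse_nil,
        List.nil_append, List.singleton_append] at hx hy ⊢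
      refine ⟨?_, hx.2⟩
      have h1 : y ∈ Dset p A (x :: f.reverse) := hy.1
      have h2 : y ∈ pstar p {z | x * z ∈ Dset p A f.reverse} := h1.2
      exact h2.1
  · intro h
    have key : ∀ A ∈ p, A ∈ p * p := by
      intro A hA
      obtain ⟨T, ⟨f₀, hf₀⟩, hmem, hBp, hsub⟩ := h A hA
      rw [mem_mul_self]
      refine Filter.mem_of_superset (hBp f₀ hf₀) ?_
      intro x hx
      refine Filter.mem_of_superset (hBp _ hx) ?_
      intro y hy
      have hmul : f₀ ++ [x * y] ∈ T := hsub f₀ hf₀ x hx hy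
      exact hmem _ hmul (x * y) (by simp)
    refine Ultrafilter.ext fun A => ⟨fun hA2 => ?_, fun hA => key A hA⟩
    by_contra hA
    have h1 := key _ ((Ultrafilter.compl_mem_iff_notMem.2 hA))
    have h2 := Filter.inter_mem hA2 h1
    rw [Set.inter_compl_self] at h2
    exact Filter.empty_notMem (↑(p * p) : Filter S) h2
end

section
/- Let (S,·) be a countable semigroup and 𝓕 a Ramsey family such that β(𝓕) is a subsemigroup of βS. Then A ⊆ S is an essential 𝓕-set (a member of some idempotent ultrafilter p ⊆ 𝓕) if and only if there exists a decreasing sequence ⟨C_n⟩_{n=1}^∞ of subsets of A such that: (a) for each n and each x ∈ C_n there exists m with C_m ⊆ x⁻¹C_n, and (b) each C_n ∈ 𝓕. -/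
open Set

attribute [local instance] Ultrafilter.mul Ultrafilter.semigroup

namespace EssentialAux

variable {S : Type*} [Semigroup S]

theorem mem_mul {U V : Ultrafilter S} {A : Set S} :
    A ∈ U * V ↔ {a | {b | a * b ∈ A} ∈ V} ∈ U := Iff.rfl

/-- The "star" of a set with respect to an ultrafilter. -/
def star (p : Ultrafilter S) (B : Set S) : Set S :=
  {x | x ∈ B ∧ {y | x * y ∈ B} ∈ p}

theorem star_subset (p : Ultrafilter S) (B : Set S) : star p B ⊆ B := fun _ hx => hx.1

theorem star_mem {p : Ultrafilter S} (hp : p * p = p) {B : Set S} (hB : B ∈ p) :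
    star p B ∈ p := by
  have h2 : B ∈ p * p := hp.symm ▸ hB
  rw [mem_mul] at h2
  exact Filter.inter_mem hB h2

theorem star_star {p : Ultrafilter S} (hp : p * p = p) {B : Set S} {x : S}
    (hx : x ∈ star p B) : {y | x * y ∈ star p B} ∈ p := by
  have hxB : {y | x * y ∈ B} ∈ p := hx.2
  have h := star_mem hp hxB
  apply Filter.mem_of_superset h
  intro y hy
  refine ⟨hy.1, ?_⟩
  have h2 : {z | y * z ∈ {w | x * w ∈ B}} ∈ p := hy.2
  have : {z | y * z ∈ {w | x * w ∈ B}} = {z | (x * y) * z ∈ B} := by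
    ext z; simp [mul_assoc]
  rwa [this] at h2

/-- The decreasing chain of sets witnessing that `A` is an essential `F`-set. -/
def chain (p : Ultrafilter S) (f : ℕ → S) (A : Set S) : ℕ → Set S
  | 0 => star p A
  | (k + 1) =>
      star p (chain p f A k ∩
        {y | f (Nat.unpair k).2 ∈ chain p f A (Nat.unpair k).1 →
          f (Nat.unpair k).2 * y ∈ chain p f A (Nat.unpair k).1})
  decreasing_by
  all_goals first
    | exact Nat.lt_succ_self k
    | exact Nat.lt_succ_of_le (Nat.unpair_left_le k)

theorem chain_zero (p : Ultrafilter S) (f : ℕ → S) (A : Set S) :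
    chain p f A 0 = star p A := by
  rw [chain]

theorem chain_succ (p : Ultrafilter S) (f : ℕ → S) (A : Set S) (k : ℕ) :
    chain p f A (k + 1) = star p (chain p f A k ∩
      {y | f (Nat.unpair k).2 ∈ chain p f A (Nat.unpair k).1 →
        f (Nat.unpair k).2 * y ∈ chain p f A (Nat.unpair k).1}) := by
  rw [chain]

theorem chain_form {p : Ultrafilter S} (hp : p * p = p) (f : ℕ → S) {A : Set S}
    (hA : A ∈ p) : ∀ k, ∃ B ∈ p, chain p f A k = star p B := by
  intro k
  induction k using Nat.strong_induction_on with
  | _ k ih =>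
    match k with
    | 0 => exact ⟨A, hA, chain_zero p f A⟩
    | (k + 1) =>
      obtain ⟨Bk, hBk, hBkeq⟩ := ih k (Nat.lt_succ_self k)
      have hk : chain p f A k ∈ p := by rw [hBkeq]; exact star_mem hp hBk
      have hT : {y | f (Nat.unpair k).2 ∈ chain p f A (Nat.unpair k).1 →
          f (Nat.unpair k).2 * y ∈ chain p f A (Nat.unpair k).1} ∈ p := by
        by_cases h : f (Nat.unpair k).2 ∈ chain p f A (Nat.unpair k).1
        · obtain ⟨Bn, hBn, hBneq⟩ := ih (Nat.unpair k).1
            (Nat.lt_succ_of_le (Nat.unpair_left_le k))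
          rw [hBneq] at h
          have := star_star hp h
          rw [← hBneq] at this
          apply Filter.mem_of_superset this
          intro y hy _
          exact hy
        · apply Filter.mem_of_superset Filter.univ_mem
          intro y _ h'
          exact absurd h' h
      exact ⟨_, Filter.inter_mem hk hT, chain_succ p f A k⟩

theorem chain_mem {p : Ultrafilter S} (hp : p * p = p) (f : ℕ → S) {A : Set S}
    (hA : A ∈ p) (k : ℕ) : chain p f A k ∈ p := by
  obtain ⟨B, hB, hBeq⟩ := chain_form hp f hA k
  rw [hBeq]; exact star_mem hp hB

theorem chain_succ_subset (p : Ultrafilter S) (f : ℕ → S) (A : Set S) (k : ℕ) :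
    chain p f A (k + 1) ⊆ chain p f A k := by
  rw [chain_succ]
  exact (star_subset _ _).trans Set.inter_subset_left

theorem chain_subset (p : Ultrafilter S) (f : ℕ → S) (A : Set S) (k : ℕ) :
    chain p f A k ⊆ A := by
  induction k with
  | zero => rw [chain_zero]; exact star_subset _ _
  | succ k ih => exact (chain_succ_subset p f A k).trans ih

end EssentialAux

open EssentialAux

/-- for countable S, A is an essential 𝓕-set iff there is a decreasing sequence
⟨C_n⟩ of 𝓕-subsets of A such that for each n and x ∈ C_n there is m with C_m ⊆ x⁻¹C_n. -/
theorem essential_F_set_iff_chain {S : Type*} [Semigroup S] [Countable S] (F : Set (Set S))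
    (hne : F.Nonempty) (h0 : ∅ ∉ F)
    (hup : ∀ A ∈ F, ∀ B : Set S, A ⊆ B → B ∈ F)
    (hram : ∀ A ∈ F, ∀ A₁ A₂ : Set S, A = A₁ ∪ A₂ → A₁ ∈ F ∨ A₂ ∈ F)
    (hsub : ∀ p q : Ultrafilter S, (∀ A ∈ p, A ∈ F) → (∀ A ∈ q, A ∈ F) →
      ∀ A ∈ p * q, A ∈ F)
    (A : Set S) :
    (∃ p : Ultrafilter S, p * p = p ∧ (∀ B ∈ p, B ∈ F) ∧ A ∈ p) ↔
      ∃ C : ℕ → Set S, (∀ n : ℕ, C (n + 1) ⊆ C n) ∧ (∀ n : ℕ, C n ⊆ A) ∧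
        (∀ n : ℕ, ∀ x ∈ C n, ∃ m : ℕ, C m ⊆ {y : S | x * y ∈ C n}) ∧
        (∀ n : ℕ, C n ∈ F) := by
  constructor
  · rintro ⟨p, hp, hpF, hA⟩
    obtain ⟨a, -⟩ := Filter.nonempty_of_mem (f := (p : Filter S)) hA
    have : Nonempty S := ⟨a⟩
    obtain ⟨f, hf⟩ := exists_surjective_nat S
    refine ⟨chain p f A, chain_succ_subset p f A, chain_subset p f A, ?_, ?_⟩
    · intro n x hx
      obtain ⟨j, rfl⟩ := hf x
      refine ⟨Nat.pair n j + 1, ?_⟩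
      intro y hy
      rw [chain_succ] at hy
      have h2 := (star_subset _ _ hy).2
      rw [Nat.unpair_pair] at h2
      exact h2 hx
    · intro n
      exact hpF _ (chain_mem hp f hA n)
  · rintro ⟨C, hdec, hCA, hcond, hCF⟩
    -- C is antitone
    have hmono : ∀ m n : ℕ, n ≤ m → C m ⊆ C n := by
      intro m n h
      induction h with
      | refl => exact Set.Subset.rfl
      | step _ ih => exact (hdec _).trans ih
    -- Zorn: find an ultrafilter containing every `C n`, all of whose members are in F
    set 𝒮 : Set (Set (Set S)) := {G | (∀ n, C n ∈ G) ∧ (∀ B ∈ G, B ∈ F) ∧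
      (∀ B₁ ∈ G, ∀ B₂ ∈ G, B₁ ∩ B₂ ∈ G) ∧ (∀ B₁ ∈ G, ∀ B₂ : Set S, B₁ ⊆ B₂ → B₂ ∈ G)} with h𝒮
    have hG0 : {B : Set S | ∃ n, C n ⊆ B} ∈ 𝒮 := by
      refine ⟨fun n => ⟨n, Subset.rfl⟩, ?_, ?_, ?_⟩
      · rintro B ⟨n, hn⟩; exact hup _ (hCF n) _ hn
      · rintro B₁ ⟨n₁, hn₁⟩ B₂ ⟨n₂, hn₂⟩
        exact ⟨max n₁ n₂, Set.subset_inter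
          ((hmono _ _ (le_max_left n₁ n₂)).trans hn₁)
          ((hmono _ _ (le_max_right n₁ n₂)).trans hn₂)⟩
      · rintro B₁ ⟨n, hn⟩ B₂ h12; exact ⟨n, hn.trans h12⟩
    obtain ⟨G, -, hGmem, hGmax⟩ :
        ∃ G, {B : Set S | ∃ n, C n ⊆ B} ⊆ G ∧ G ∈ 𝒮 ∧ ∀ G' ∈ 𝒮, G ⊆ G' → G' = G := by
      have hzorn : ∀ c ⊆ 𝒮, IsChain (· ⊆ ·) c → c.Nonempty →
          ∃ ub ∈ 𝒮, ∀ s ∈ c, s ⊆ ub := ?_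
      · obtain ⟨G, hsub', hmax⟩ := zorn_subset_nonempty 𝒮 hzorn _ hG0
        exact ⟨G, hsub', hmax.prop, fun G' hG' hGG' =>
          Set.Subset.antisymm (hmax.2 hG' hGG') hGG'⟩
      intro c hc hchain hcne
      refine ⟨⋃₀ c, ⟨?_, ?_, ?_, ?_⟩, fun s hs => subset_sUnion_of_mem hs⟩
      · intro n
        obtain ⟨G, hG⟩ := hcne
        exact ⟨G, hG, (hc hG).1 n⟩
      · rintro B ⟨G, hG, hBG⟩; exact (hc hG).2.1 B hBG
      · rintro B₁ ⟨G₁, hG₁, hB₁⟩ B₂ ⟨G₂, hG₂, hB₂⟩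
        rcases hchain.total hG₁ hG₂ with h | h
        · exact ⟨G₂, hG₂, (hc hG₂).2.2.1 B₁ (h hB₁) B₂ hB₂⟩
        · exact ⟨G₁, hG₁, (hc hG₁).2.2.1 B₁ hB₁ B₂ (h hB₂)⟩
      · rintro B₁ ⟨G, hG, hB₁⟩ B₂ h12
        exact ⟨G, hG, (hc hG).2.2.2 B₁ hB₁ B₂ h12⟩
    obtain ⟨hGC, hGF, hGinter, hGup⟩ := hGmem
    -- G decides every set
    have hdecide : ∀ B : Set S, B ∈ G ∨ Bᶜ ∈ G := by
      intro B
      by_contra hcon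
      push_neg at hcon
      obtain ⟨hB, hBc⟩ := hcon
      -- one of the two directions works for extending G
      have key : (∀ g ∈ G, g ∩ B ∈ F) ∨ (∀ g ∈ G, g ∩ Bᶜ ∈ F) := by
        by_contra hk
        push_neg at hk
        obtain ⟨⟨g₁, hg₁, hg₁B⟩, ⟨g₂, hg₂, hg₂B⟩⟩ := hk
        have hg : g₁ ∩ g₂ ∈ G := hGinter _ hg₁ _ hg₂
        have := hram _ (hGF _ hg) ((g₁ ∩ g₂) ∩ B) ((g₁ ∩ g₂) ∩ Bᶜ)
          (by rw [← Set.inter_union_distrib_left, Set.union_compl_self, Set.inter_univ])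
        rcases this with h | h
        · exact hg₁B (hup _ h _ (Set.inter_subset_inter_left B Set.inter_subset_left))
        · exact hg₂B (hup _ h _ (Set.inter_subset_inter_left Bᶜ Set.inter_subset_right))
      -- in either case we can extend G, contradicting maximality
      have ext : ∀ D : Set S, (∀ g ∈ G, g ∩ D ∈ F) → D ∈ G := by
        intro D hD
        set G' : Set (Set S) := {E | ∃ g ∈ G, g ∩ D ⊆ E} with hG'
        have hsub' : G ⊆ G' := fun g hg => ⟨g, hg, Set.inter_subset_left⟩
        have hG'mem : G' ∈ 𝒮 := by
          refine ⟨fun n => hsub' (hGC n), ?_, ?_, ?_⟩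
          · rintro E ⟨g, hg, hgE⟩; exact hup _ (hD g hg) _ hgE
          · rintro E₁ ⟨g₁, hg₁, h₁⟩ E₂ ⟨g₂, hg₂, h₂⟩
            refine ⟨g₁ ∩ g₂, hGinter _ hg₁ _ hg₂, ?_⟩
            intro x hx
            exact ⟨h₁ ⟨hx.1.1, hx.2⟩, h₂ ⟨hx.1.2, hx.2⟩⟩
          · rintro E₁ ⟨g, hg, hgE⟩ E₂ h12; exact ⟨g, hg, hgE.trans h12⟩
        have heq : G' = G := hGmax G' hG'mem hsub'
        rw [← heq]
        exact ⟨C 0, hGC 0, Set.inter_subset_right⟩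
      rcases key with h | h
      · exact hB (ext B h)
      · exact hBc (ext Bᶜ h)
    -- G is never self-contradictory
    have hnotboth : ∀ B : Set S, B ∈ G → Bᶜ ∈ G → False := by
      intro B h h'
      have : B ∩ Bᶜ ∈ G := hGinter _ h _ h'
      rw [Set.inter_compl_self] at this
      exact h0 (hGF _ this)
    -- build the ultrafilter from G
    let fG : Filter S :=
      { sets := G
        univ_sets := hGup _ (hGC 0) _ (Set.subset_univ _)
        sets_of_superset := fun h hsub => hGup _ h _ hsub
        inter_sets := fun h h' => hGinter _ h _ h' }
    let p₀ : Ultrafilter S := Ultrafilter.ofComplNotMemIff fG (by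
      intro s
      constructor
      · intro h
        rcases hdecide s with h' | h'
        · exact h'
        · exact absurd h' h
      · intro h h'
        exact hnotboth s h h')
    have hp₀mem : ∀ B : Set S, B ∈ p₀ ↔ B ∈ G := fun _ => Iff.rfl
    -- the compact subsemigroup
    set M : Set (Ultrafilter S) := {q | (∀ B ∈ q, B ∈ F) ∧ ∀ n, C n ∈ q} with hM
    have hMne : M.Nonempty :=
      ⟨p₀, fun B hB => hGF _ ((hp₀mem B).mp hB), fun n => (hp₀mem (C n)).mpr (hGC n)⟩
    have hMclosed : IsClosed M := by
      have : M = {q : Ultrafilter S | ∀ B ∈ q, B ∈ F} ∩ ⋂ n, {q : Ultrafilter S | C n ∈ q} := by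
        ext q
        simp only [hM, Set.mem_setOf_eq, Set.mem_inter_iff, Set.mem_iInter]
      rw [this]
      refine IsClosed.inter ?_ (isClosed_iInter fun n => ultrafilter_isClosed_basic (C n))
      have h2 : {q : Ultrafilter S | ∀ B ∈ q, B ∈ F} =
          ⋂ B ∈ {B : Set S | B ∉ F}, {q : Ultrafilter S | Bᶜ ∈ q} := by
        ext q
        simp only [Set.mem_setOf_eq, Set.mem_iInter]
        constructor
        · intro h B hB
          rw [Ultrafilter.compl_mem_iff_notMem]
          intro hBq
          exact hB (h B hBq)
        · intro h B hBq
          by_contra hB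
          have := h B hB
          rw [Ultrafilter.compl_mem_iff_notMem] at this
          exact this hBq
      rw [h2]
      exact isClosed_biInter fun B _ => ultrafilter_isClosed_basic _
    have hMmul : ∀ q₁ ∈ M, ∀ q₂ ∈ M, q₁ * q₂ ∈ M := by
      rintro q₁ ⟨hq₁F, hq₁C⟩ q₂ ⟨hq₂F, hq₂C⟩
      refine ⟨fun B hB => hsub q₁ q₂ hq₁F hq₂F B hB, ?_⟩
      intro n
      rw [EssentialAux.mem_mul]
      apply Filter.mem_of_superset (hq₁C n)
      intro x hx
      obtain ⟨m, hm⟩ := hcond n x hx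
      exact Filter.mem_of_superset (hq₂C m) hm
    obtain ⟨p, hpM, hpidem⟩ := exists_idempotent_in_compact_subsemigroup
      Ultrafilter.continuous_mul_left M hMne hMclosed.isCompact hMmul
    exact ⟨p, hpidem, hpM.1, Filter.mem_of_superset (hpM.2 0) (hCA 0)⟩
end

section
/- Let S be a group, 𝓕 a Ramsey family of subsets of S such that β(𝓕) is a subsemigroup of βS, and G ≤ S a subgroup with G ∈ 𝓕. Then G is an essential 𝓕-set, i.e., there exists an idempotent ultrafilter p with p ⊆ 𝓕 and G ∈ p. -/
open Set

attribute [local instance] Ultrafilter.mul Ultrafilter.semigroup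

/-- if S is a group, 𝓕 a Ramsey family with β(𝓕) a subsemigroup of βS, and
G is a subgroup of S with G ∈ 𝓕, then G is an essential 𝓕-set. -/
theorem subgroup_essential_F_set {S : Type*} [Group S] (F : Set (Set S))
    (hne : F.Nonempty) (h0 : ∅ ∉ F)
    (hup : ∀ A ∈ F, ∀ B : Set S, A ⊆ B → B ∈ F)
    (hram : ∀ A ∈ F, ∀ A₁ A₂ : Set S, A = A₁ ∪ A₂ → A₁ ∈ F ∨ A₂ ∈ F)
    (hsub : ∀ p q : Ultrafilter S, (∀ A ∈ p, A ∈ F) → (∀ A ∈ q, A ∈ F) →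
      ∀ A ∈ p * q, A ∈ F)
    (G : Subgroup S) (hG : (G : Set S) ∈ F) :
    ∃ p : Ultrafilter S, p * p = p ∧ (∀ B ∈ p, B ∈ F) ∧ (G : Set S) ∈ p := by
  classical
  -- the target set of ultrafilters
  set T : Set (Ultrafilter S) :=
    {p : Ultrafilter S | (∀ A ∈ p, A ∈ F) ∧ (G : Set S) ∈ p} with hT
  -- T is nonempty
  have hTne : T.Nonempty := by
    -- build the filter {B | G \ B ∉ F}
    let f : Filter S :=
      { sets := {B | (G : Set S) \ B ∉ F}
        univ_sets := by simpa using h0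
        sets_of_superset := by
          intro B B' hB hBB' hB'
          exact hB (hup _ hB' _ (diff_subset_diff_right hBB'))
        inter_sets := by
          intro B C hB hC h
          have : (G : Set S) \ (B ∩ C) = ((G : Set S) \ B) ∪ ((G : Set S) \ C) := by
            ext x; simp [and_or_left]; tauto
          rcases hram _ h _ _ this with h' | h'
          · exact hB h'
          · exact hC h' }
    have hfG : (G : Set S) ∈ f := by
      show (G : Set S) \ (G : Set S) ∉ F
      simpa using h0
    have : f.NeBot := by
      rw [Filter.neBot_iff]
      intro hbot
      have : (∅ : Set S) ∈ f := by rw [hbot]; trivial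
      exact this (by simpa using hG)
    obtain ⟨p, hp⟩ := Filter.exists_ultrafilter_le f
    refine ⟨p, ?_, hp hfG⟩
    intro A hA
    by_contra hAF
    have hGA : (G : Set S) ∩ A ∉ F := fun h => hAF (hup _ h _ inter_subset_right)
    have hcompl : Aᶜ ∈ f := by
      show (G : Set S) \ Aᶜ ∉ F
      simpa [diff_compl] using hGA
    exact (Ultrafilter.compl_mem_iff_notMem.mp (hp hcompl)) hA
  -- T is closed under multiplication
  have hTmul : ∀ p ∈ T, ∀ q ∈ T, p * q ∈ T := by
    rintro p ⟨hpF, hpG⟩ q ⟨hqF, hqG⟩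
    refine ⟨hsub p q hpF hqF, ?_⟩
    have : ∀ᶠ m in ↑(p * q), m ∈ (G : Set S) := by
      rw [Ultrafilter.eventually_mul]
      filter_upwards [hpG] with m hm
      filter_upwards [hqG] with m' hm'
      exact mul_mem hm hm'
    exact this
  -- T is closed, hence compact
  have hTclosed : IsClosed T := by
    have : T = (⋂ (A : Set S) (_ : A ∉ F), {p : Ultrafilter S | Aᶜ ∈ p}) ∩
        {p : Ultrafilter S | (G : Set S) ∈ p} := by
      ext p
      simp only [mem_iInter, mem_inter_iff, mem_setOf_eq, hT]
      constructor
      · rintro ⟨h1, h2⟩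
        refine ⟨fun A hA => ?_, h2⟩
        rw [Ultrafilter.compl_mem_iff_notMem]
        exact fun hAp => hA (h1 A hAp)
      · rintro ⟨h1, h2⟩
        refine ⟨fun A hAp => ?_, h2⟩
        by_contra hA
        exact (Ultrafilter.compl_mem_iff_notMem.mp (h1 A hA)) hAp
    rw [this]
    exact IsClosed.inter
      (isClosed_iInter fun A => isClosed_iInter fun _ => ultrafilter_isClosed_basic _)
      (ultrafilter_isClosed_basic _)
  obtain ⟨p, hpT, hidem⟩ := exists_idempotent_in_compact_subsemigroup
    Ultrafilter.continuous_mul_left T hTne hTclosed.isCompact hTmul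
  exact ⟨p, hidem, hpT.1, hpT.2⟩
end

section
/- Let 𝓕 be an inverse shift-invariant Ramsey family on (ℕ,+) (meaning −n + E ∈ 𝓕 for all n ∈ ℕ, E ∈ 𝓕) such that β(𝓕) is a subsemigroup of (βℕ,+). For a sequence ⟨x_n⟩ in ℕ, the following are equivalent: (1) ⋂_{m=1}^∞ cl(FS(⟨x_n⟩_{n=m}^∞)) ∩ β(𝓕) ≠ ∅; (2) FS(⟨x_n⟩_{n=1}^∞) ∈ q for some ultrafilter q ⊆ 𝓕; (3) there is an idempotent ultrafilter in ⋂_{m=1}^∞ cl(FS(⟨x_n⟩_{n=m}^∞)) ∩ β(𝓕). -/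
/-!
If `FS x` belongs to an ultrafilter inside `𝓕`, then every tail `FS (x.drop m)` lies in `𝓕`:
splitting `FS y` into `{y₀}`, `y₀ + FS y.tail` and `FS y.tail`, partition regularity puts one
piece in `𝓕`, a singleton cannot be there (shifting it gives `∅`), and shifting the middle piece
back by `y₀` gives `FS y.tail`. Partition regularity then yields, for each `m`, an ultrafilter
inside `𝓕` containing `FS (x.drop m)`; since `β(𝓕)` is closed and the tails are nested,
compactness of `βℕ` gives one ultrafilter containing all of them. The set
`⋂ₘ cl(FS(x.drop m)) ∩ β(𝓕)` is a compact subsemigroup, so it contains an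
idempotent (Ellis–Numakura).
-/

open Set Filter

attribute [local instance] Ultrafilter.add Ultrafilter.addSemigroup

variable {α : Type*}

/-- The paper's `β(𝓕)`. -/
def betaFamily (F : Set (Set α)) : Set (Ultrafilter α) := {p | ∀ A ∈ p, A ∈ F}

theorem isClosed_betaFamily (F : Set (Set α)) : IsClosed (betaFamily F) := by
  have : betaFamily F = ⋂ A ∈ Fᶜ, {p : Ultrafilter α | Aᶜ ∈ p} := by
    ext p
    simp [betaFamily, Ultrafilter.compl_mem_iff_notMem, not_imp_not]
  rw [this]
  exact isClosed_biInter fun A _ => ultrafilter_isClosed_basic _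

structure IsRamseyFamily (F : Set (Set α)) : Prop where
  empty_notMem : ∅ ∉ F
  mem_of_superset {A B : Set α} : A ∈ F → A ⊆ B → B ∈ F
  mem_or_mem_of_union_mem {A B : Set α} : A ∪ B ∈ F → A ∈ F ∨ B ∈ F

namespace IsRamseyFamily

variable {F : Set (Set α)}

theorem exists_mem_betaFamily (hF : IsRamseyFamily F) {A : Set α} (hA : A ∈ F) :
    ∃ p ∈ betaFamily F, A ∈ p := by
  -- dual to `{s | s ∩ A ∉ F}`, an ideal by partition regularity, proper since `A ∈ F`
  let G : Filter α := comk (fun s => s ∩ A ∉ F) (by simpa using hF.empty_notMem)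
    (fun t ht s hst hs => ht (hF.mem_of_superset hs (inter_subset_inter_left _ hst)))
    (fun s hs t ht hst => by
      rw [union_inter_distrib_right] at hst
      exact (hF.mem_or_mem_of_union_mem hst).elim hs ht)
  have : G.NeBot := ⟨fun hbot => (mem_comk.1 (hbot ▸ mem_bot : (∅ : Set α) ∈ G)) (by simpa)⟩
  refine ⟨Ultrafilter.of G, fun C hC => ?_,
    Ultrafilter.of_le G (by simpa [G] using hF.empty_notMem)⟩
  by_contra hCF
  have hCc : Cᶜ ∈ G := mem_comk.2 <| by
    rw [compl_compl]
    exact fun h => hCF (hF.mem_of_superset h inter_subset_left)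
  exact Ultrafilter.compl_notMem_iff.2 hC (Ultrafilter.of_le G hCc)

theorem nonempty_iInter_inter_betaFamily (hF : IsRamseyFamily F) {S : ℕ → Set α}
    (hS : Antitone S) (hSF : ∀ m, S m ∈ F) :
    ((⋂ m, {p : Ultrafilter α | S m ∈ p}) ∩ betaFamily F).Nonempty := by
  have hclosed m : IsClosed ({p : Ultrafilter α | S m ∈ p} ∩ betaFamily F) :=
    (ultrafilter_isClosed_basic _).inter (isClosed_betaFamily F)
  rw [iInter_inter]
  refine IsCompact.nonempty_iInter_of_sequence_nonempty_isCompact_isClosed _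
    (fun m => inter_subset_inter_left _ fun p hp => p.mem_of_superset hp (hS m.le_succ))
    (fun m => ?_) (hclosed 0).isCompact hclosed
  obtain ⟨p, hpF, hSp⟩ := hF.exists_mem_betaFamily (hSF m)
  exact ⟨p, hSp, hpF⟩

end IsRamseyFamily

namespace Hindman

variable {M : Type*} [AddSemigroup M]

theorem FS_drop_antitone (x : Stream' M) : Antitone fun m => FS (x.drop m) := by
  intro m k hmk
  simpa only [Stream'.drop_drop, Nat.add_sub_cancel' hmk] using
    FS_iter_tail_sub_FS (x.drop m) (k - m)

theorem FS_subset_insert_head (x : Stream' M) :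
    FS x ⊆ insert x.head ((x.head + ·) '' FS x.tail ∪ FS x.tail) := by
  intro a ha
  cases ha with
  | head' => exact Or.inl rfl
  | tail' _ m h => exact Or.inr (Or.inr h)
  | cons' _ m h => exact Or.inr (Or.inl ⟨m, h, rfl⟩)

theorem FS_drop_mem_add {x : Stream' M} {p q : Ultrafilter M}
    (hp : p ∈ ⋂ m, {p : Ultrafilter M | FS (x.drop m) ∈ p})
    (hq : q ∈ ⋂ m, {p : Ultrafilter M | FS (x.drop m) ∈ p}) :
    p + q ∈ ⋂ m, {p : Ultrafilter M | FS (x.drop m) ∈ p} := by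
  rw [mem_iInter] at hp hq ⊢
  intro m
  show ∀ᶠ n in ↑(p + q), n ∈ FS (x.drop m)
  rw [Ultrafilter.eventually_add]
  filter_upwards [hp m] with n hn
  obtain ⟨n', hn'⟩ := FS.add hn
  filter_upwards [hq (m + n')] with k hk
  exact hn' _ (by rwa [Stream'.drop_drop])

end Hindman

section ShiftInvariant

variable {F : Set (Set ℕ)}

theorem singleton_notMem_of_shift (h0 : ∅ ∉ F)
    (hinv : ∀ n : ℕ, ∀ E ∈ F, {m : ℕ | n + m ∈ E} ∈ F) (a : ℕ) : ({a} : Set ℕ) ∉ F := by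
  intro ha
  have : {m : ℕ | a + 1 + m ∈ ({a} : Set ℕ)} = ∅ :=
    eq_empty_of_forall_notMem fun m hm => by simp at hm; omega
  exact h0 (this ▸ hinv (a + 1) _ ha)

theorem IsRamseyFamily.FS_tail_mem (hF : IsRamseyFamily F)
    (hinv : ∀ n : ℕ, ∀ E ∈ F, {m : ℕ | n + m ∈ E} ∈ F) {x : Stream' ℕ}
    (hx : Hindman.FS x ∈ F) : Hindman.FS x.tail ∈ F := by
  have hsplit := hF.mem_of_superset hx (Hindman.FS_subset_insert_head x)
  rw [insert_eq] at hsplit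
  rcases hF.mem_or_mem_of_union_mem hsplit with hhead | hrest
  · exact absurd hhead (singleton_notMem_of_shift hF.empty_notMem hinv _)
  rcases hF.mem_or_mem_of_union_mem hrest with hshift | htail
  · have : (x.head + ·) ⁻¹' ((x.head + ·) '' Hindman.FS x.tail) ∈ F := hinv x.head _ hshift
    rwa [preimage_image_eq _ (add_right_injective x.head)] at this
  · exact htail

theorem IsRamseyFamily.FS_drop_mem (hF : IsRamseyFamily F)
    (hinv : ∀ n : ℕ, ∀ E ∈ F, {m : ℕ | n + m ∈ E} ∈ F) {x : Stream' ℕ}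
    (hx : Hindman.FS x ∈ F) (m : ℕ) : Hindman.FS (x.drop m) ∈ F := by
  induction m with
  | zero => exact hx
  | succ m ih => simpa using hF.FS_tail_mem hinv ih

end ShiftInvariant

theorem F_minimal_sequence_characterization_general (F : Set (Set ℕ))
    (h0 : ∅ ∉ F)
    (hup : ∀ A ∈ F, ∀ B : Set ℕ, A ⊆ B → B ∈ F)
    (hram : ∀ A ∈ F, ∀ A₁ A₂ : Set ℕ, A = A₁ ∪ A₂ → A₁ ∈ F ∨ A₂ ∈ F)
    (hinv : ∀ n : ℕ, ∀ E ∈ F, {m : ℕ | n + m ∈ E} ∈ F)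
    (hsub : ∀ p q : Ultrafilter ℕ, (∀ A ∈ p, A ∈ F) → (∀ A ∈ q, A ∈ F) →
      ∀ A ∈ p + q, A ∈ F)
    (x : Stream' ℕ) :
    (((⋂ m : ℕ, {p : Ultrafilter ℕ | Hindman.FS (x.drop m) ∈ p}) ∩
        {p : Ultrafilter ℕ | ∀ A ∈ p, A ∈ F}).Nonempty ↔
      ∃ q : Ultrafilter ℕ, (∀ A ∈ q, A ∈ F) ∧ Hindman.FS x ∈ q) ∧
    (((⋂ m : ℕ, {p : Ultrafilter ℕ | Hindman.FS (x.drop m) ∈ p}) ∩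
        {p : Ultrafilter ℕ | ∀ A ∈ p, A ∈ F}).Nonempty ↔
      ∃ p : Ultrafilter ℕ, p + p = p ∧
        p ∈ (⋂ m : ℕ, {p : Ultrafilter ℕ | Hindman.FS (x.drop m) ∈ p}) ∩
          {p : Ultrafilter ℕ | ∀ A ∈ p, A ∈ F}) := by
  have hF : IsRamseyFamily F := ⟨h0, fun hA hAB => hup _ hA _ hAB, fun h => hram _ h _ _ rfl⟩
  have hclosed : IsClosed ((⋂ m : ℕ, {p : Ultrafilter ℕ | Hindman.FS (x.drop m) ∈ p}) ∩
      betaFamily F) :=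
    (isClosed_iInter fun m => ultrafilter_isClosed_basic _).inter (isClosed_betaFamily F)
  refine ⟨⟨fun ⟨p, hp, hpF⟩ => ⟨p, hpF, mem_iInter.1 hp 0⟩, fun ⟨q, hqF, hxq⟩ => ?_⟩,
    ⟨fun hS => ?_, fun ⟨p, _, hp⟩ => ⟨p, hp⟩⟩⟩
  · exact hF.nonempty_iInter_inter_betaFamily (Hindman.FS_drop_antitone x)
      (hF.FS_drop_mem hinv (hqF _ hxq))
  · obtain ⟨p, hp, hpp⟩ := exists_idempotent_in_compact_add_subsemigroup
      Ultrafilter.continuous_add_left _ hS hclosed.isCompact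
      fun p hp q hq => ⟨Hindman.FS_drop_mem_add hp.1 hq.1, hsub p q hp.2 hq.2⟩
    exact ⟨p, hpp, hp⟩

/-- characterization of 𝓕-minimal sequences in (ℕ,+): the three conditions
(1) ⋂_m cl(FS(⟨x_n⟩_{n=m}^∞)) ∩ β(𝓕) ≠ ∅, (2) FS(⟨x_n⟩) belongs to some ultrafilter
contained in 𝓕, (3) there is an idempotent in ⋂_m cl(FS(⟨x_n⟩_{n=m}^∞)) ∩ β(𝓕),
are equivalent. -/
theorem F_minimal_sequence_characterization (F : Set (Set ℕ))
    (hne : F.Nonempty) (h0 : ∅ ∉ F)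
    (hup : ∀ A ∈ F, ∀ B : Set ℕ, A ⊆ B → B ∈ F)
    (hram : ∀ A ∈ F, ∀ A₁ A₂ : Set ℕ, A = A₁ ∪ A₂ → A₁ ∈ F ∨ A₂ ∈ F)
    (hinv : ∀ n : ℕ, ∀ E ∈ F, {m : ℕ | n + m ∈ E} ∈ F)
    (hsub : ∀ p q : Ultrafilter ℕ, (∀ A ∈ p, A ∈ F) → (∀ A ∈ q, A ∈ F) →
      ∀ A ∈ p + q, A ∈ F)
    (x : Stream' ℕ) :
    (((⋂ m : ℕ, {p : Ultrafilter ℕ | Hindman.FS (x.drop m) ∈ p}) ∩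
        {p : Ultrafilter ℕ | ∀ A ∈ p, A ∈ F}).Nonempty ↔
      ∃ q : Ultrafilter ℕ, (∀ A ∈ q, A ∈ F) ∧ Hindman.FS x ∈ q) ∧
    (((⋂ m : ℕ, {p : Ultrafilter ℕ | Hindman.FS (x.drop m) ∈ p}) ∩
        {p : Ultrafilter ℕ | ∀ A ∈ p, A ∈ F}).Nonempty ↔
      ∃ p : Ultrafilter ℕ, p + p = p ∧
        p ∈ (⋂ m : ℕ, {p : Ultrafilter ℕ | Hindman.FS (x.drop m) ∈ p}) ∩
          {p : Ultrafilter ℕ | ∀ A ∈ p, A ∈ F}) :=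
  F_minimal_sequence_characterization_general F h0 hup hram hinv hsub x
end

section
/- Let 𝓕 be a dilation-invariant Ramsey family on (ℕ,+) (nE ∈ 𝓕 for all n ∈ ℕ, E ∈ 𝓕) such that β(𝓕) is a subsemigroup of (βℕ,+). If A ⊆ ℕ is an essential 𝓕-set in (ℕ,+), then for every n ∈ ℕ, the dilate nA = {na : a ∈ A} is also an essential 𝓕-set in (ℕ,+). -/
open Set

attribute [local instance] Ultrafilter.add Ultrafilter.addSemigroup

lemma map_add_ultra (f : ℕ → ℕ) (hf : ∀ a b, f (a + b) = f a + f b)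
    (U V : Ultrafilter ℕ) : (U + V).map f = U.map f + V.map f := by
  apply Ultrafilter.coe_inj.mp
  apply Filter.ext' fun p => ?_
  rw [Ultrafilter.coe_map, Filter.eventually_map]
  rw [show ((↑(U.map f + V.map f) : Filter ℕ)) = _ from rfl]
  rw [Ultrafilter.eventually_add, Ultrafilter.eventually_add]
  simp only [Ultrafilter.coe_map, Filter.eventually_map, hf]

/-- if 𝓕 is a dilation-invariant Ramsey family on (ℕ,+) with β(𝓕) a
subsemigroup of (βℕ,+), and A is an essential 𝓕-set, then so is nA for every n. -/
theorem dilate_essential_F_set (F : Set (Set ℕ))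
    (hne : F.Nonempty) (h0 : ∅ ∉ F)
    (hup : ∀ A ∈ F, ∀ B : Set ℕ, A ⊆ B → B ∈ F)
    (hram : ∀ A ∈ F, ∀ A₁ A₂ : Set ℕ, A = A₁ ∪ A₂ → A₁ ∈ F ∨ A₂ ∈ F)
    (hdil : ∀ n : ℕ, ∀ E ∈ F, (fun m => n * m) '' E ∈ F)
    (hsub : ∀ p q : Ultrafilter ℕ, (∀ A ∈ p, A ∈ F) → (∀ A ∈ q, A ∈ F) →
      ∀ A ∈ p + q, A ∈ F)
    (A : Set ℕ)
    (hA : ∃ p : Ultrafilter ℕ, p + p = p ∧ (∀ B ∈ p, B ∈ F) ∧ A ∈ p) :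
    ∀ n : ℕ, ∃ p : Ultrafilter ℕ, p + p = p ∧ (∀ B ∈ p, B ∈ F) ∧
      (fun m => n * m) '' A ∈ p := by
  intro n
  obtain ⟨p, hid, hF, hAp⟩ := hA
  refine ⟨p.map (fun m => n * m), ?_, ?_, ?_⟩
  · rw [← map_add_ultra _ (fun a b => Nat.mul_add n a b), hid]
  · intro B hB
    rw [Ultrafilter.mem_map] at hB
    exact hup _ (hdil n _ (hF _ hB)) B (Set.image_preimage_subset _ _)
  · rw [Ultrafilter.mem_map]
    exact p.mem_of_superset hAp (Set.subset_preimage_image _ _)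
end

section
/- Let 𝓕 be a dilation-invariant Ramsey family on (ℕ,+) such that β(𝓕) is a subsemigroup of (βℕ,+). If A ⊆ ℕ is an essential 𝓕*-set (A meets every essential 𝓕-set; equivalently A ∈ p for every idempotent ultrafilter p ⊆ 𝓕), then for every n ∈ ℕ, n⁻¹A = {m ∈ ℕ : nm ∈ A} is also an essential 𝓕*-set. -/
open Set

attribute [local instance] Ultrafilter.add Ultrafilter.addSemigroup

/-- if 𝓕 is a dilation-invariant Ramsey family on (ℕ,+) with β(𝓕) a
subsemigroup of (βℕ,+), and A is an essential 𝓕*-set (a member of every additive idempotent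
ultrafilter contained in 𝓕), then so is n⁻¹A = {m : nm ∈ A} for every n. -/
theorem preimage_dilate_essential_F_star_set (F : Set (Set ℕ))
    (hne : F.Nonempty) (h0 : ∅ ∉ F)
    (hup : ∀ A ∈ F, ∀ B : Set ℕ, A ⊆ B → B ∈ F)
    (hram : ∀ A ∈ F, ∀ A₁ A₂ : Set ℕ, A = A₁ ∪ A₂ → A₁ ∈ F ∨ A₂ ∈ F)
    (hdil : ∀ n : ℕ, ∀ E ∈ F, (fun m => n * m) '' E ∈ F)
    (hsub : ∀ p q : Ultrafilter ℕ, (∀ A ∈ p, A ∈ F) → (∀ A ∈ q, A ∈ F) →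
      ∀ A ∈ p + q, A ∈ F)
    (A : Set ℕ)
    (hA : ∀ p : Ultrafilter ℕ, p + p = p → (∀ B ∈ p, B ∈ F) → A ∈ p) :
    ∀ n : ℕ, ∀ p : Ultrafilter ℕ, p + p = p → (∀ B ∈ p, B ∈ F) →
      {m : ℕ | n * m ∈ A} ∈ p := by
  intro n p hp hpF
  set q : Ultrafilter ℕ := p.map (fun m => n * m) with hq
  have hmemq : ∀ s : Set ℕ, s ∈ q ↔ {m : ℕ | n * m ∈ s} ∈ p := by
    intro s; rfl
  have hqidem : q + q = q := by
    apply Ultrafilter.coe_injective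
    apply Filter.ext
    intro s
    have h1 : s ∈ q + q ↔ ∀ᶠ a in (q : Filter ℕ), ∀ᶠ b in (q : Filter ℕ), a + b ∈ s :=
      Ultrafilter.eventually_add q q (· ∈ s)
    have h2 : s ∈ p + p ↔ ∀ᶠ a in (p : Filter ℕ), ∀ᶠ b in (p : Filter ℕ), a + b ∈ s :=
      Ultrafilter.eventually_add p p (· ∈ s)
    rw [Ultrafilter.mem_coe, Ultrafilter.mem_coe, h1]
    have : (∀ᶠ a in (q : Filter ℕ), ∀ᶠ b in (q : Filter ℕ), a + b ∈ s) ↔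
        (∀ᶠ a in (p : Filter ℕ), ∀ᶠ b in (p : Filter ℕ), n * a + n * b ∈ s) := by
      simp only [hq, Ultrafilter.coe_map, Filter.eventually_map]
    rw [this]
    have : (∀ᶠ a in (p : Filter ℕ), ∀ᶠ b in (p : Filter ℕ), n * a + n * b ∈ s) ↔
        ∀ᶠ a in (p : Filter ℕ), ∀ᶠ b in (p : Filter ℕ), a + b ∈ {m : ℕ | n * m ∈ s} := by
      simp only [Set.mem_setOf_eq, Nat.mul_add]
    rw [this, ← Ultrafilter.eventually_add p p]
    have h3 := congrArg (fun r : Ultrafilter ℕ => {m : ℕ | n * m ∈ s} ∈ r) hp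
    simp only [eq_iff_iff] at h3
    have h4 : (∀ᶠ m in ((p + p : Ultrafilter ℕ) : Filter ℕ), m ∈ {m : ℕ | n * m ∈ s}) ↔
        {m : ℕ | n * m ∈ s} ∈ p + p := Iff.rfl
    rw [h4, h3]
    exact (hmemq s).symm
  have hqF : ∀ B ∈ q, B ∈ F := by
    intro B hB
    have hpre : {m : ℕ | n * m ∈ B} ∈ p := (hmemq B).mp hB
    have h1 : {m : ℕ | n * m ∈ B} ∈ F := hpF _ hpre
    have h2 : (fun m => n * m) '' {m : ℕ | n * m ∈ B} ∈ F := hdil n _ h1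
    exact hup _ h2 B (by rintro x ⟨m, hm, rfl⟩; exact hm)
  exact (hmemq A).mp (hA q hqidem hqF)
end

section
/- Let (S,+,·) be a left weak ring (i.e., (S,+) and (S,·) are semigroups and x·(y+z) = x·y + x·z for all x,y,z) and let 𝓕 be a left dilation-invariant Ramsey family on S (sE ∈ 𝓕 for all s ∈ S, E ∈ 𝓕) such that β(𝓕) is a subsemigroup of (βS,+). If A ⊆ S is an essential 𝓕-set in (S,+), then sA = {s·a : a ∈ A} is an essential 𝓕-set in (S,+) for every s ∈ S. -/
open Set

attribute [local instance] Ultrafilter.add Ultrafilter.addSemigroup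

/-- in a left weak ring (S,+,·), if 𝓕 is a left dilation-invariant Ramsey
family with β(𝓕) a subsemigroup of (βS,+) and A is an essential 𝓕-set in (S,+), then sA
is an essential 𝓕-set for every s ∈ S. -/
theorem left_dilate_essential_F_set {S : Type*} [AddSemigroup S] [Semigroup S]
    (hdistrib : ∀ x y z : S, x * (y + z) = x * y + x * z)
    (F : Set (Set S))
    (hne : F.Nonempty) (h0 : ∅ ∉ F)
    (hup : ∀ A ∈ F, ∀ B : Set S, A ⊆ B → B ∈ F)
    (hram : ∀ A ∈ F, ∀ A₁ A₂ : Set S, A = A₁ ∪ A₂ → A₁ ∈ F ∨ A₂ ∈ F)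
    (hdil : ∀ s : S, ∀ E ∈ F, (fun t => s * t) '' E ∈ F)
    (hsub : ∀ p q : Ultrafilter S, (∀ A ∈ p, A ∈ F) → (∀ A ∈ q, A ∈ F) →
      ∀ A ∈ p + q, A ∈ F)
    (A : Set S)
    (hA : ∃ p : Ultrafilter S, p + p = p ∧ (∀ B ∈ p, B ∈ F) ∧ A ∈ p) :
    ∀ s : S, ∃ p : Ultrafilter S, p + p = p ∧ (∀ B ∈ p, B ∈ F) ∧
      (fun t => s * t) '' A ∈ p := by
  intro s
  obtain ⟨p, hpp, hpF, hAp⟩ := hA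
  refine ⟨p.map (fun t => s * t), ?_, ?_, ?_⟩
  · have key : p.map (fun t => s * t) + p.map (fun t => s * t)
        = (p + p).map (fun t => s * t) := by
      apply Ultrafilter.coe_inj.mp
      apply Filter.ext'
      intro q
      simp only [Ultrafilter.eventually_add, Ultrafilter.coe_map, Filter.eventually_map,
        hdistrib]
    rw [key, hpp]
  · intro B hB
    have h1 : (fun t => s * t) ⁻¹' B ∈ p := Ultrafilter.mem_map.mp hB
    refine hup _ (hdil s _ (hpF _ h1)) B ?_
    rintro _ ⟨x, hx, rfl⟩
    exact hx
  · exact Ultrafilter.mem_map.mpr (Filter.mem_of_superset hAp fun x hx => ⟨x, hx, rfl⟩)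
end

section
/- Let (S,+,·) be a left weak ring and 𝓕 a left dilation-invariant Ramsey family on S such that β(𝓕) is a subsemigroup of (βS,+). If A ⊆ S is an essential 𝓕*-set in (S,+) (i.e., A ∈ p for every idempotent ultrafilter p ⊆ 𝓕), then s⁻¹A = {y ∈ S : s·y ∈ A} is an essential 𝓕*-set in (S,+) for every s ∈ S. -/
open Set

attribute [local instance] Ultrafilter.add Ultrafilter.addSemigroup

/-- in a left weak ring (S,+,·), if 𝓕 is a left dilation-invariant Ramsey
family with β(𝓕) a subsemigroup of (βS,+) and A is an essential 𝓕*-set in (S,+), then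
s⁻¹A = {y : s·y ∈ A} is an essential 𝓕*-set for every s ∈ S. -/
theorem left_preimage_essential_F_star_set {S : Type*} [AddSemigroup S] [Semigroup S]
    (hdistrib : ∀ x y z : S, x * (y + z) = x * y + x * z)
    (F : Set (Set S))
    (hne : F.Nonempty) (h0 : ∅ ∉ F)
    (hup : ∀ A ∈ F, ∀ B : Set S, A ⊆ B → B ∈ F)
    (hram : ∀ A ∈ F, ∀ A₁ A₂ : Set S, A = A₁ ∪ A₂ → A₁ ∈ F ∨ A₂ ∈ F)
    (hdil : ∀ s : S, ∀ E ∈ F, (fun t => s * t) '' E ∈ F)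
    (hsub : ∀ p q : Ultrafilter S, (∀ A ∈ p, A ∈ F) → (∀ A ∈ q, A ∈ F) →
      ∀ A ∈ p + q, A ∈ F)
    (A : Set S)
    (hA : ∀ p : Ultrafilter S, p + p = p → (∀ B ∈ p, B ∈ F) → A ∈ p) :
    ∀ s : S, ∀ p : Ultrafilter S, p + p = p → (∀ B ∈ p, B ∈ F) →
      {y : S | s * y ∈ A} ∈ p := by
  intro s p hidem hpF
  set q : Ultrafilter S := p.map (fun t => s * t) with hq
  have hmem : ∀ B : Set S, B ∈ q ↔ {y : S | s * y ∈ B} ∈ p := fun B => Iff.rfl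
  -- q is idempotent
  have hqidem : q + q = q := by
    apply Ultrafilter.coe_inj.mp
    apply Filter.ext' (fun r => ?_)
    have h1 : (∀ᶠ m in ↑(q + q), r m) ↔ ∀ᶠ m in ↑q, ∀ᶠ m' in ↑q, r (m + m') :=
      Ultrafilter.eventually_add q q r
    rw [h1]
    have h2 : (∀ᶠ m in ↑q, ∀ᶠ m' in ↑q, r (m + m')) ↔
        ∀ᶠ a in ↑p, ∀ᶠ b in ↑p, r (s * a + s * b) := Iff.rfl
    have h3 : (∀ᶠ a in ↑p, ∀ᶠ b in ↑p, r (s * a + s * b)) ↔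
        ∀ᶠ a in ↑p, ∀ᶠ b in ↑p, r (s * (a + b)) := by
      simp only [hdistrib]
    have h4 : (∀ᶠ a in ↑p, ∀ᶠ b in ↑p, r (s * (a + b))) ↔
        ∀ᶠ m in ↑(p + p), r (s * m) := (Ultrafilter.eventually_add p p (fun m => r (s * m))).symm
    rw [h2, h3, h4, hidem]
    exact Iff.rfl
  -- all members of q are in F
  have hqF : ∀ B ∈ q, B ∈ F := by
    intro B hB
    have hpre : {y : S | s * y ∈ B} ∈ p := hB
    have h1 : (fun t => s * t) '' {y : S | s * y ∈ B} ∈ F :=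
      hdil s _ (hpF _ hpre)
    apply hup _ h1
    rintro x ⟨y, hy, rfl⟩
    exact hy
  exact hA q hqidem hqF
end

section
/- Let (S,+,·) be a weak ring (both distributive laws hold) and let 𝓕 be a (two-sided) dilation-invariant Ramsey family on S such that β(𝓕) is a subsemigroup of (βS,+). If A is an essential 𝓕*-set in (S,+) then for all s,t ∈ S, the set s⁻¹At⁻¹ = {y ∈ S : s·y·t ∈ A} is an essential 𝓕*-set in (S,+). -/
open Set

attribute [local instance] Ultrafilter.add Ultrafilter.addSemigroup

/-- in a weak ring (S,+,·), if 𝓕 is a (two-sided) dilation-invariant Ramsey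
family with β(𝓕) a subsemigroup of (βS,+) and A is an essential 𝓕*-set in (S,+), then
s⁻¹At⁻¹ = {y : s·y·t ∈ A} is an essential 𝓕*-set for all s, t ∈ S. -/
theorem two_sided_preimage_essential_F_star_set {S : Type*} [AddSemigroup S] [Semigroup S]
    (hldistrib : ∀ x y z : S, x * (y + z) = x * y + x * z)
    (hrdistrib : ∀ x y z : S, (x + y) * z = x * z + y * z)
    (F : Set (Set S))
    (hne : F.Nonempty) (h0 : ∅ ∉ F)
    (hup : ∀ A ∈ F, ∀ B : Set S, A ⊆ B → B ∈ F)
    (hram : ∀ A ∈ F, ∀ A₁ A₂ : Set S, A = A₁ ∪ A₂ → A₁ ∈ F ∨ A₂ ∈ F)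
    (hldil : ∀ s : S, ∀ E ∈ F, (fun t => s * t) '' E ∈ F)
    (hrdil : ∀ s : S, ∀ E ∈ F, (fun t => t * s) '' E ∈ F)
    (hsub : ∀ p q : Ultrafilter S, (∀ A ∈ p, A ∈ F) → (∀ A ∈ q, A ∈ F) →
      ∀ A ∈ p + q, A ∈ F)
    (A : Set S)
    (hA : ∀ p : Ultrafilter S, p + p = p → (∀ B ∈ p, B ∈ F) → A ∈ p) :
    ∀ s t : S, ∀ p : Ultrafilter S, p + p = p → (∀ B ∈ p, B ∈ F) →
      {y : S | s * y * t ∈ A} ∈ p := by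
  intro s t p hidem hpF
  set φ : S → S := fun y => s * y * t with hφ
  have hhom : ∀ y z : S, φ (y + z) = φ y + φ z := by
    intro y z
    simp only [hφ, hldistrib, hrdistrib]
  set q : Ultrafilter S := p.map φ with hq
  have hmem : ∀ B : Set S, B ∈ q ↔ φ ⁻¹' B ∈ p := fun B => Iff.rfl
  -- q is idempotent
  have hqidem : q + q = q := by
    apply Ultrafilter.coe_inj.mp
    apply Filter.ext
    intro B
    have h1 : B ∈ q + q ↔ {y : S | {z : S | y + z ∈ B} ∈ q} ∈ q :=
      Ultrafilter.eventually_add q q (· ∈ B)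
    have h2 : B ∈ p + p ↔ {y : S | {z : S | y + z ∈ B} ∈ p} ∈ p :=
      Ultrafilter.eventually_add p p (· ∈ B)
    show B ∈ q + q ↔ B ∈ q
    rw [h1, hmem, hmem]
    have hinner : ∀ y : S, φ ⁻¹' {z : S | φ y + z ∈ B} = {z : S | y + z ∈ φ ⁻¹' B} := by
      intro y; ext z
      simp only [Set.mem_preimage, Set.mem_setOf_eq, hhom]
    have : φ ⁻¹' {y : S | {z : S | y + z ∈ B} ∈ q} =
        {y : S | {z : S | y + z ∈ φ ⁻¹' B} ∈ p} := by
      ext y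
      simp only [Set.mem_preimage, Set.mem_setOf_eq, hmem, hinner y]
    rw [this]
    exact (Ultrafilter.eventually_add p p (· ∈ φ ⁻¹' B)).symm.trans (by rw [hidem]; exact Iff.rfl)
  -- q ⊆ F
  have hqF : ∀ B ∈ q, B ∈ F := by
    intro B hB
    have hpre : φ ⁻¹' B ∈ F := hpF _ hB
    have h1 : (fun y => s * y) '' (φ ⁻¹' B) ∈ F := hldil s _ hpre
    have h2 : (fun y => y * t) '' ((fun y => s * y) '' (φ ⁻¹' B)) ∈ F := hrdil t _ h1
    refine hup _ h2 B ?_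
    rintro x ⟨y, ⟨z, hz, rfl⟩, rfl⟩
    exact hz
  exact hA q hqidem hqF
end

section
/- Let (S,+,·) be a weak ring, and let 𝓕 be a left inverse shift-invariant (for +) and (two-sided) dilation-invariant Ramsey family on S such that β(𝓕) is a subsemigroup of (βS,+). Let ⟨x_n⟩ be an 𝓕-minimal sequence in (S,+) (i.e., ⋂_{m=1}^∞ cl(FS(⟨x_n⟩_{n=m}^∞)) ∩ β(𝓕) ≠ ∅) and A an essential 𝓕*-set in (S,+). Then there exists a sum subsystem ⟨y_n⟩ of ⟨x_n⟩ such that FS(⟨y_n⟩_{n=1}^∞) ∪ AP(⟨y_n⟩_{n=1}^∞) ⊆ A, where AP denotes all finite products of distinct terms in any order. -/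
/-!
Take an idempotent ultrafilter `p` in the closed subsemigroup `⋂ₘ cl FS(⟨xₙ⟩_{n ≥ m}) ∩ β(𝓕)`
of `βS`. As `A` is an essential `𝓕*`-set, `A ∈ p`. For fixed `w, w'` the maps `t ↦ w t`,
`t ↦ t w` and `t ↦ w t w'` are additive (distributivity) and map `𝓕` into `𝓕` (dilation
invariance), so they send `p` to idempotents of `β(𝓕)`; hence the preimages of `A` under them
lie in `p` too. Now pick the blocks `yₙ ∈ FS(⟨xₖ⟩_{k > max Hₙ₋₁})` one at a time inside
`A⋆ = {s ∈ A | -s + A ∈ p}`, also shifted by every earlier finite sum, and such that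
`w yₙ, yₙ w, w yₙ w' ∈ A` for all products `w, w'` of distinct earlier terms. This is a finite
intersection of members of `p`. A product of distinct terms has the form `w yₙ w'` with `n` its
largest index, so all of `AP(⟨yₙ⟩)` lies in `A`.
-/

open Set

attribute [local instance] Ultrafilter.add Ultrafilter.addSemigroup

/-- Sum of x over the indices a :: l, in the listed (increasing) order. -/
def seqSum {S : Type*} [AddSemigroup S] (x : ℕ → S) (a : ℕ) (l : List ℕ) : S :=
  (l.map x).foldl (· + ·) (x a)

/-- Product of y over the indices a :: l, in the listed order. -/
def seqProd {S : Type*} [Semigroup S] (y : ℕ → S) (a : ℕ) (l : List ℕ) : S :=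
  (l.map y).foldl (· * ·) (y a)

/-- FS(⟨x_n⟩_{n=m}^∞): sums over nonempty finite sets of indices ≥ m, in increasing order. -/
def FSfrom {S : Type*} [AddSemigroup S] (x : ℕ → S) (m : ℕ) : Set S :=
  {s | ∃ (a : ℕ) (l : List ℕ), m ≤ a ∧ List.Chain (· < ·) a l ∧ s = seqSum x a l}

/-- AP(⟨y_n⟩): all products of finitely many distinct terms, in any order, no repetitions. -/
def APset {S : Type*} [Semigroup S] (y : ℕ → S) : Set S :=
  {s | ∃ (a : ℕ) (l : List ℕ), (a :: l).Nodup ∧ s = seqProd y a l}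

theorem List.finite_setOf_nodup_forall_lt (n : ℕ) :
    {L : List ℕ | L.Nodup ∧ ∀ i ∈ L, i < n}.Finite := by
  refine ((List.finite_length_le (Fin n) n).image (List.map Fin.val)).subset ?_
  rintro L ⟨hnd, hlt⟩
  set L' := L.pmap (fun i h => (⟨i, h⟩ : Fin n)) hlt
  have hL' : L'.map Fin.val = L := by simp [L', List.map_pmap]
  refine ⟨L', ?_, hL'⟩
  simpa using (List.Nodup.of_map _ (hL' ▸ hnd : (L'.map Fin.val).Nodup)).length_le_card

theorem List.IsChain.head_le_of_mem {a j : ℕ} {l : List ℕ} (h : (a :: l).IsChain (· < ·))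
    (hj : j ∈ a :: l) : a ≤ j := by
  rcases List.mem_cons.mp hj with rfl | hj
  exacts [le_rfl, (h.rel_cons hj).le]

section Sums

variable {S : Type*} [AddSemigroup S]

theorem seqSum_append (x : ℕ → S) (a b : ℕ) (l l' : List ℕ) :
    seqSum x a (l ++ b :: l') = seqSum x a l + seqSum x b l' := by
  simp only [seqSum, List.map_append, List.foldl_append, List.map_cons, List.foldl_cons]
  exact List.foldl_assoc

theorem seqSum_congr {x x' : ℕ → S} {a : ℕ} {l : List ℕ} (h : ∀ i ∈ a :: l, x i = x' i) :
    seqSum x a l = seqSum x' a l := by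
  simp only [seqSum, h a List.mem_cons_self, List.map_congr_left fun i hi => h i (.tail _ hi)]

theorem exists_add_mem_FSfrom {x : ℕ → S} {m : ℕ} {s : S} (hs : s ∈ FSfrom x m) :
    ∃ k, ∀ t ∈ FSfrom x k, s + t ∈ FSfrom x m := by
  obtain ⟨a, l, hma, hch, rfl⟩ := hs
  obtain ⟨k, hk⟩ := Finset.exists_nat_subset_range (a :: l).toFinset
  refine ⟨k, ?_⟩
  rintro _ ⟨b, l', hkb, hch', rfl⟩
  refine ⟨a, l ++ b :: l', hma, hch.append hch' fun i hi j hj => ?_, (seqSum_append ..).symm⟩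
  obtain rfl : j = b := by simpa using hj.symm
  have := hk (List.mem_toFinset.mpr (List.mem_of_getLast? hi))
  simp only [Finset.mem_range] at this
  omega

def FSbelow (y : ℕ → S) (n : ℕ) : Set S :=
  {s | ∃ a l, (a :: l).IsChain (· < ·) ∧ (∀ i ∈ a :: l, i < n) ∧ s = seqSum y a l}

theorem FSbelow_finite (y : ℕ → S) (n : ℕ) : (FSbelow y n).Finite := by
  refine ((List.finite_setOf_nodup_forall_lt n).image fun L => seqSum y L.headI L.tail).subset ?_
  rintro _ ⟨a, l, hch, hlt, rfl⟩
  exact ⟨a :: l, ⟨hch.pairwise.imp ne_of_lt, hlt⟩, rfl⟩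

theorem FSbelow_congr {y y' : ℕ → S} {n : ℕ} (h : ∀ k < n, y k = y' k) :
    FSbelow y n = FSbelow y' n := by
  have key : ∀ {y y' : ℕ → S}, (∀ k < n, y k = y' k) → FSbelow y n ⊆ FSbelow y' n := by
    rintro y y' h _ ⟨a, l, hch, hlt, rfl⟩
    exact ⟨a, l, hch, hlt, seqSum_congr fun i hi => h i (hlt i hi)⟩
  exact (key h).antisymm (key fun k hk => (h k hk).symm)

theorem FSbelow_zero (y : ℕ → S) : FSbelow y 0 = ∅ :=
  eq_empty_of_forall_notMem fun _ ⟨a, _, _, hlt, _⟩ =>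
    (hlt a List.mem_cons_self).not_ge (Nat.zero_le a)

theorem FSbelow_succ_subset {y : ℕ → S} {n : ℕ} {B : Set S} (hB : FSbelow y n ⊆ B)
    (hy : y n ∈ B) (hadd : ∀ s ∈ FSbelow y n, s + y n ∈ B) : FSbelow y (n + 1) ⊆ B := by
  rintro _ ⟨a, l, hch, hlt, rfl⟩
  by_cases hn : ∀ i ∈ a :: l, i < n
  · exact hB ⟨a, l, hch, hn, rfl⟩
  rcases l.eq_nil_or_concat with rfl | ⟨L, b, rfl⟩
  · obtain rfl : a = n := by
      simp only [List.mem_singleton, forall_eq, not_lt] at hn hlt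
      omega
    exact hy
  rw [List.concat_eq_append] at hch hlt hn ⊢
  have hpw : ((a :: L) ++ [b]).Pairwise (· < ·) := List.isChain_iff_pairwise.mp hch
  obtain ⟨hpw, -, hlast⟩ := List.pairwise_append.mp hpw
  have hb : ∀ i ∈ a :: L, i < b := fun i hi => hlast i hi b (by simp)
  obtain rfl : b = n := by
    refine le_antisymm (Nat.lt_succ_iff.mp (hlt b (by simp)))
      (not_lt.mp fun hbn => hn fun i hi => ?_)
    rcases List.mem_append.mp (show i ∈ (a :: L) ++ [b] from hi) with hi | hi
    · exact (hb i hi).trans hbn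
    · rwa [List.mem_singleton.mp hi]
  rw [seqSum_append]
  exact hadd _ ⟨a, L, List.isChain_iff_pairwise.mpr hpw, hb, rfl⟩

end Sums

section Products

variable {S : Type*} [Semigroup S]

theorem seqProd_append (y : ℕ → S) (a b : ℕ) (l l' : List ℕ) :
    seqProd y a (l ++ b :: l') = seqProd y a l * seqProd y b l' := by
  simp only [seqProd, List.map_append, List.foldl_append, List.map_cons, List.foldl_cons]
  exact List.foldl_assoc

theorem seqProd_cons (y : ℕ → S) (a b : ℕ) (l : List ℕ) :
    seqProd y a (b :: l) = y a * seqProd y b l :=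
  seqProd_append y a b [] l

theorem seqProd_congr {y y' : ℕ → S} {a : ℕ} {l : List ℕ} (h : ∀ i ∈ a :: l, y i = y' i) :
    seqProd y a l = seqProd y' a l := by
  simp only [seqProd, h a List.mem_cons_self, List.map_congr_left fun i hi => h i (.tail _ hi)]

def Pbelow (y : ℕ → S) (n : ℕ) : Set S :=
  {s | ∃ a l, (a :: l).Nodup ∧ (∀ i ∈ a :: l, i < n) ∧ s = seqProd y a l}

theorem Pbelow_finite (y : ℕ → S) (n : ℕ) : (Pbelow y n).Finite := by
  refine ((List.finite_setOf_nodup_forall_lt n).image fun L => seqProd y L.headI L.tail).subset ?_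
  rintro _ ⟨a, l, hnd, hlt, rfl⟩
  exact ⟨a :: l, ⟨hnd, hlt⟩, rfl⟩

theorem Pbelow_congr {y y' : ℕ → S} {n : ℕ} (h : ∀ k < n, y k = y' k) :
    Pbelow y n = Pbelow y' n := by
  have key : ∀ {y y' : ℕ → S}, (∀ k < n, y k = y' k) → Pbelow y n ⊆ Pbelow y' n := by
    rintro y y' h _ ⟨a, l, hnd, hlt, rfl⟩
    exact ⟨a, l, hnd, hlt, seqProd_congr fun i hi => h i (hlt i hi)⟩
  exact (key h).antisymm (key fun k hk => (h k hk).symm)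

theorem Pbelow_zero (y : ℕ → S) : Pbelow y 0 = ∅ :=
  eq_empty_of_forall_notMem fun _ ⟨a, _, _, hlt, _⟩ =>
    (hlt a List.mem_cons_self).not_ge (Nat.zero_le a)

theorem Pbelow_succ_subset {y : ℕ → S} {n : ℕ} {B : Set S} (hB : Pbelow y n ⊆ B)
    (hy : y n ∈ B) (hl : ∀ w ∈ Pbelow y n, w * y n ∈ B) (hr : ∀ w ∈ Pbelow y n, y n * w ∈ B)
    (hlr : ∀ w₁ ∈ Pbelow y n, ∀ w₂ ∈ Pbelow y n, w₁ * y n * w₂ ∈ B) :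
    Pbelow y (n + 1) ⊆ B := by
  rintro _ ⟨a, l, hnd, hlt, rfl⟩
  by_cases hn : n ∈ a :: l
  swap
  · exact hB ⟨a, l, hnd, fun i hi =>
      (Nat.lt_succ_iff.mp (hlt i hi)).lt_of_ne (ne_of_mem_of_not_mem hi hn), rfl⟩
  obtain ⟨L₁, L₂, hsplit⟩ := List.append_of_mem hn
  rw [hsplit] at hnd hlt
  obtain ⟨hnL, hndL⟩ := List.nodup_cons.mp (List.nodup_middle.mp hnd)
  have hP : ∀ c L, (c :: L).Sublist (L₁ ++ L₂) → seqProd y c L ∈ Pbelow y n := by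
    refine fun c L hsub => ⟨c, L, hndL.sublist hsub, fun i hi => ?_, rfl⟩
    have hiL : i ∈ L₁ ++ L₂ := hsub.subset hi
    refine (Nat.lt_succ_iff.mp (hlt i ?_)).lt_of_ne (ne_of_mem_of_not_mem hiL hnL)
    rcases List.mem_append.mp hiL with h | h <;> simp [h]
  rcases L₁ with _ | ⟨c, l₁⟩ <;> rcases L₂ with _ | ⟨d, l₂⟩ <;>
    simp only [List.nil_append, List.cons_append, List.cons.injEq] at hsplit <;>
    obtain ⟨rfl, rfl⟩ := hsplit
  · exact hy
  · rw [seqProd_cons]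
    exact hr _ (hP d l₂ (List.Sublist.refl _))
  · rw [seqProd_append]
    exact hl _ (hP a l₁ (List.sublist_append_left _ _))
  · rw [seqProd_append, seqProd_cons, ← mul_assoc]
    exact hlr _ (hP a l₁ (List.sublist_append_left _ _)) _ (hP d l₂ (List.sublist_append_right _ _))

end Products

/-- The padding `Classical.arbitrary α` at `k ≥ n` is harmless once `P f n` only depends on
`f k` for `k < n` (see `exists_seq_of_forall_exists_of_history`). -/
noncomputable def seqOfHistory {α : Type*} [Nonempty α] (P : (ℕ → α) → ℕ → α → Prop) : ℕ → α
  | n => Classical.epsilon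
      (P (fun k => if _ : k < n then seqOfHistory P k else Classical.arbitrary α) n)

theorem exists_seq_of_forall_exists_of_history {α : Type*} [Nonempty α]
    (P : (ℕ → α) → ℕ → α → Prop)
    (hloc : ∀ f g n a, (∀ k < n, f k = g k) → P f n a → P g n a)
    (hext : ∀ f n, (∀ k < n, P f k (f k)) → ∃ a, P f n a) :
    ∃ f : ℕ → α, ∀ n, P f n (f n) := by
  refine ⟨seqOfHistory P, fun n => ?_⟩
  induction n using Nat.strong_induction_on with
  | _ n ih =>
    set g : ℕ → α := fun k => if _ : k < n then seqOfHistory P k else Classical.arbitrary α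
    have hg : ∀ k < n, g k = seqOfHistory P k := fun k hk => dif_pos hk
    rw [seqOfHistory]
    refine hloc g _ n _ hg (Classical.epsilon_spec (hext g n fun k hk => ?_))
    rw [hg k hk]
    exact hloc _ g k _ (fun j hj => (hg j (hj.trans hk)).symm) (ih k hk)

section Ultrafilter

variable {S : Type*}

theorem Ultrafilter.isClosed_setOf_forall_mem (F : Set (Set S)) :
    IsClosed {p : Ultrafilter S | ∀ B ∈ p, B ∈ F} := by
  have : {p : Ultrafilter S | ∀ B ∈ p, B ∈ F} = ⋂ B ∈ Fᶜ, {p | B ∈ p}ᶜ := by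
    ext p
    simp only [mem_iInter, mem_compl_iff]
    exact forall_congr' fun B => not_imp_not.symm
  rw [this]
  exact isClosed_biInter fun B _ => (ultrafilter_isOpen_basic B).isClosed_compl

theorem Ultrafilter.mem_add_iff [Add S] {B : Set S} {p q : Ultrafilter S} :
    B ∈ p + q ↔ {a | {b | a + b ∈ B} ∈ q} ∈ p :=
  Iff.rfl

theorem Ultrafilter.map_add {T : Type*} [Add S] [Add T] {f : S → T}
    (hf : ∀ a b, f (a + b) = f a + f b) (p q : Ultrafilter S) :
    map f (p + q) = map f p + map f q :=
  Ultrafilter.coe_inj.mp <| Filter.ext' fun r => by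
    simp only [Ultrafilter.coe_map, Filter.eventually_map, Ultrafilter.eventually_add, hf]

variable [AddSemigroup S]

theorem add_mem_of_forall_FSfrom_mem {x : ℕ → S} {p q : Ultrafilter S}
    (hp : ∀ m, FSfrom x m ∈ p) (hq : ∀ m, FSfrom x m ∈ q) (m : ℕ) : FSfrom x m ∈ p + q := by
  refine Ultrafilter.mem_add_iff.mpr (Filter.mem_of_superset (hp m) fun s hs => ?_)
  obtain ⟨k, hk⟩ := exists_add_mem_FSfrom hs
  exact Filter.mem_of_superset (hq k) hk

theorem exists_idempotent_forall_FSfrom_mem {F : Set (Set S)}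
    (hsub : ∀ p q : Ultrafilter S, (∀ A ∈ p, A ∈ F) → (∀ A ∈ q, A ∈ F) → ∀ A ∈ p + q, A ∈ F)
    {x : ℕ → S}
    (hmin : ((⋂ m : ℕ, {p : Ultrafilter S | FSfrom x m ∈ p}) ∩
        {p : Ultrafilter S | ∀ A ∈ p, A ∈ F}).Nonempty) :
    ∃ p : Ultrafilter S, p + p = p ∧ (∀ B ∈ p, B ∈ F) ∧ ∀ m, FSfrom x m ∈ p := by
  have hclosed : IsClosed ((⋂ m : ℕ, {p : Ultrafilter S | FSfrom x m ∈ p}) ∩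
      {p : Ultrafilter S | ∀ A ∈ p, A ∈ F}) :=
    (isClosed_iInter fun m => ultrafilter_isClosed_basic _).inter
      (Ultrafilter.isClosed_setOf_forall_mem F)
  obtain ⟨p, ⟨hpx, hpF⟩, hpp⟩ :=
    exists_idempotent_in_compact_add_subsemigroup Ultrafilter.continuous_add_left _ hmin
      hclosed.isCompact fun p ⟨hpx, hpF⟩ q ⟨hqx, hqF⟩ =>
        ⟨mem_iInter.mpr (add_mem_of_forall_FSfrom_mem (mem_iInter.mp hpx) (mem_iInter.mp hqx)),
          hsub p q hpF hqF⟩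
  exact ⟨p, hpp, hpF, mem_iInter.mp hpx⟩

theorem preimage_mem_of_forall_idempotent_mem {F : Set (Set S)}
    (hup : ∀ A ∈ F, ∀ B : Set S, A ⊆ B → B ∈ F) {A : Set S}
    (hA : ∀ p : Ultrafilter S, p + p = p → (∀ B ∈ p, B ∈ F) → A ∈ p)
    {p : Ultrafilter S} (hp : p + p = p) (hpF : ∀ B ∈ p, B ∈ F) {f : S → S}
    (hf : ∀ a b, f (a + b) = f a + f b) (himage : ∀ E ∈ F, f '' E ∈ F) : f ⁻¹' A ∈ p :=
  hA (p.map f) (by rw [← Ultrafilter.map_add hf, hp])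
    (fun B hB => hup _ (himage _ (hpF _ hB)) B (image_preimage_subset f B))

/-- Hindman–Strauss' `A⋆ = {s ∈ A | -s + A ∈ p}`. -/
def starSet (p : Ultrafilter S) (A : Set S) : Set S :=
  {s ∈ A | {t | s + t ∈ A} ∈ p}

theorem starSet_subset (p : Ultrafilter S) (A : Set S) : starSet p A ⊆ A :=
  sep_subset _ _

variable {p : Ultrafilter S} {A : Set S}

theorem starSet_mem (hp : p + p = p) (hA : A ∈ p) : starSet p A ∈ p :=
  Filter.inter_mem hA (by rwa [hp] : A ∈ p + p)

theorem setOf_add_mem_starSet_mem (hp : p + p = p) {s : S} (hs : s ∈ starSet p A) :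
    {t | s + t ∈ starSet p A} ∈ p := by
  have hshift : {t | {u | s + t + u ∈ A} ∈ p} ∈ p := by
    have h : {t | s + t ∈ A} ∈ p + p := by rw [hp]; exact hs.2
    have h' : {t | {u | s + (t + u) ∈ A} ∈ p} ∈ p := Ultrafilter.mem_add_iff.mp h
    simpa only [add_assoc] using h'
  exact Filter.inter_mem hs.2 hshift

end Ultrafilter

section Construction

variable {S : Type*} [AddSemigroup S] [Semigroup S]

def nextTerms (B A : Set S) (y : ℕ → S) (n : ℕ) : Set S :=
  {t | t ∈ B ∧ (∀ s ∈ FSbelow y n, s + t ∈ B) ∧ (∀ w ∈ Pbelow y n, w * t ∈ A ∧ t * w ∈ A) ∧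
    ∀ w₁ ∈ Pbelow y n, ∀ w₂ ∈ Pbelow y n, w₁ * t * w₂ ∈ A}

theorem nextTerms_congr {B A : Set S} {y y' : ℕ → S} {n : ℕ} (h : ∀ k < n, y k = y' k) :
    nextTerms B A y n = nextTerms B A y' n := by
  simp only [nextTerms, FSbelow_congr h, Pbelow_congr h]

theorem FSbelow_subset_and_Pbelow_subset {B A : Set S} (hBA : B ⊆ A) {y : ℕ → S} {n : ℕ}
    (hy : ∀ k < n, y k ∈ nextTerms B A y k) : FSbelow y n ⊆ B ∧ Pbelow y n ⊆ A := by
  induction n with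
  | zero => simp [FSbelow_zero, Pbelow_zero]
  | succ n ih =>
    obtain ⟨hFS, hP⟩ := ih fun k hk => hy k (hk.trans n.lt_succ_self)
    obtain ⟨hyB, hadd, hmul, hmul₂⟩ := hy n n.lt_succ_self
    exact ⟨FSbelow_succ_subset hFS hyB hadd, Pbelow_succ_subset hP (hBA hyB)
      (fun w hw => (hmul w hw).1) (fun w hw => (hmul w hw).2) hmul₂⟩

theorem FSfrom_zero_union_APset_subset {y : ℕ → S} {A : Set S} (hFS : ∀ N, FSbelow y N ⊆ A)
    (hP : ∀ N, Pbelow y N ⊆ A) : FSfrom y 0 ∪ APset y ⊆ A := by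
  rintro s (⟨a, l, -, hch, rfl⟩ | ⟨a, l, hnd, rfl⟩) <;>
    obtain ⟨N, hN⟩ := Finset.exists_nat_subset_range (a :: l).toFinset <;>
    have hlt : ∀ i ∈ a :: l, i < N := fun i hi =>
      Finset.mem_range.mp (hN (List.mem_toFinset.mpr hi))
  exacts [hFS N ⟨a, l, hch, hlt, rfl⟩, hP N ⟨a, l, hnd, hlt, rfl⟩]

variable {p : Ultrafilter S} {A : Set S}

theorem nextTerms_mem (hp : p + p = p) (hA : A ∈ p) (hl : ∀ w, {t | w * t ∈ A} ∈ p)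
    (hr : ∀ w, {t | t * w ∈ A} ∈ p) (hlr : ∀ w₁ w₂, {t | w₁ * t * w₂ ∈ A} ∈ p)
    {y : ℕ → S} {n : ℕ} (hFS : FSbelow y n ⊆ starSet p A) :
    nextTerms (starSet p A) A y n ∈ p := by
  have hfin := Pbelow_finite y n
  refine Filter.Eventually.and (starSet_mem hp hA) <| Filter.Eventually.and ?_ <|
    Filter.Eventually.and ?_ ?_
  · exact (Filter.eventually_all_finite (FSbelow_finite y n)).mpr fun s hs =>
      setOf_add_mem_starSet_mem hp (hFS hs)
  · exact (Filter.eventually_all_finite hfin).mpr fun w _ => Filter.Eventually.and (hl w) (hr w)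
  · exact (Filter.eventually_all_finite hfin).mpr fun w₁ _ =>
      (Filter.eventually_all_finite hfin).mpr fun w₂ _ => hlr w₁ w₂

theorem exists_sum_subsystem_FS_AP_subset (hp : p + p = p) {x : ℕ → S}
    (hx : ∀ m, FSfrom x m ∈ p) (hA : A ∈ p) (hl : ∀ w, {t | w * t ∈ A} ∈ p)
    (hr : ∀ w, {t | t * w ∈ A} ∈ p) (hlr : ∀ w₁ w₂, {t | w₁ * t * w₂ ∈ A} ∈ p) :
    ∃ (y : ℕ → S) (H : ℕ → Finset ℕ),
      (∀ n : ℕ, (H n).Nonempty) ∧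
      (∀ n : ℕ, ∀ i ∈ H n, ∀ j ∈ H (n + 1), i < j) ∧
      (∀ n : ℕ, ∃ (a : ℕ) (l : List ℕ),
        (H n).sort (· ≤ ·) = a :: l ∧ y n = seqSum x a l) ∧
      FSfrom y 0 ∪ APset y ⊆ A := by
  -- `b = (a, l)` encodes the block `H = {a} ∪ l` and the term `∑_{i ∈ H} x i`
  let P : (ℕ → ℕ × List ℕ) → ℕ → ℕ × List ℕ → Prop := fun d n b =>
    (∀ k < n, ∀ i ∈ (d k).1 :: (d k).2, i < b.1) ∧ (b.1 :: b.2).IsChain (· < ·) ∧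
      seqSum x b.1 b.2 ∈ nextTerms (starSet p A) A (fun k => seqSum x (d k).1 (d k).2) n
  have hloc : ∀ d d' n b, (∀ k < n, d k = d' k) → P d n b → P d' n b := by
    rintro d d' n b h ⟨hlt, hch, hnext⟩
    refine ⟨fun k hk => h k hk ▸ hlt k hk, hch, ?_⟩
    rwa [nextTerms_congr fun k hk => by rw [h k hk]] at hnext
  have hext : ∀ d n, (∀ k < n, P d k (d k)) → ∃ b, P d n b := by
    intro d n hd
    have hFS := (FSbelow_subset_and_Pbelow_subset (starSet_subset p A)
      fun k hk => (hd k hk).2.2).1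
    obtain ⟨m, hm⟩ := Finset.exists_nat_subset_range
      ((Finset.range n).biUnion fun k => ((d k).1 :: (d k).2).toFinset)
    obtain ⟨_, ⟨a, l, hma, hch, rfl⟩, hnext⟩ :=
      Ultrafilter.nonempty_of_mem (Filter.inter_mem (hx m) (nextTerms_mem hp hA hl hr hlr hFS))
    refine ⟨(a, l), fun k hk i hi => ?_, hch, hnext⟩
    have := hm (Finset.mem_biUnion.mpr ⟨k, Finset.mem_range.mpr hk, List.mem_toFinset.mpr hi⟩)
    simp only [Finset.mem_range] at this
    omega
  obtain ⟨d, hd⟩ := exists_seq_of_forall_exists_of_history P hloc hext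
  set y : ℕ → S := fun k => seqSum x (d k).1 (d k).2
  have hbelow : ∀ N, FSbelow y N ⊆ starSet p A ∧ Pbelow y N ⊆ A := fun N =>
    FSbelow_subset_and_Pbelow_subset (starSet_subset p A) fun k _ => (hd k).2.2
  refine ⟨y, fun n => ((d n).1 :: (d n).2).toFinset,
    fun n => ⟨(d n).1, by simp⟩, fun n i hi j hj => ?_, fun n => ⟨(d n).1, (d n).2, ?_, rfl⟩,
    FSfrom_zero_union_APset_subset (fun N => (hbelow N).1.trans (starSet_subset p A))
      fun N => (hbelow N).2⟩
  · exact ((hd (n + 1)).1 n n.lt_succ_self i (List.mem_toFinset.mp hi)).trans_le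
      ((hd (n + 1)).2.1.head_le_of_mem (List.mem_toFinset.mp hj))
  · have hpw := (hd n).2.1.pairwise
    exact (List.toFinset_sort _ (hpw.imp ne_of_lt)).mpr (hpw.imp le_of_lt)

end Construction

theorem weak_ring_F_star_additive_multiplicative_general {S : Type*} [AddSemigroup S] [Semigroup S]
    (hldistrib : ∀ x y z : S, x * (y + z) = x * y + x * z)
    (hrdistrib : ∀ x y z : S, (x + y) * z = x * z + y * z)
    (F : Set (Set S))
    (hup : ∀ A ∈ F, ∀ B : Set S, A ⊆ B → B ∈ F)
    (hldil : ∀ s : S, ∀ E ∈ F, (fun t => s * t) '' E ∈ F)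
    (hrdil : ∀ s : S, ∀ E ∈ F, (fun t => t * s) '' E ∈ F)
    (hsub : ∀ p q : Ultrafilter S, (∀ A ∈ p, A ∈ F) → (∀ A ∈ q, A ∈ F) →
      ∀ A ∈ p + q, A ∈ F)
    (x : ℕ → S)
    (hmin : ((⋂ m : ℕ, {p : Ultrafilter S | FSfrom x m ∈ p}) ∩
        {p : Ultrafilter S | ∀ A ∈ p, A ∈ F}).Nonempty)
    (A : Set S)
    (hA : ∀ p : Ultrafilter S, p + p = p → (∀ B ∈ p, B ∈ F) → A ∈ p) :
    ∃ (y : ℕ → S) (H : ℕ → Finset ℕ),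
      (∀ n : ℕ, (H n).Nonempty) ∧
      (∀ n : ℕ, ∀ i ∈ H n, ∀ j ∈ H (n + 1), i < j) ∧
      (∀ n : ℕ, ∃ (a : ℕ) (l : List ℕ),
        (H n).sort (· ≤ ·) = a :: l ∧ y n = seqSum x a l) ∧
      FSfrom y 0 ∪ APset y ⊆ A := by
  obtain ⟨p, hp, hpF, hpx⟩ := exists_idempotent_forall_FSfrom_mem hsub hmin
  have hpre : ∀ f : S → S, (∀ a b, f (a + b) = f a + f b) → (∀ E ∈ F, f '' E ∈ F) →
      f ⁻¹' A ∈ p :=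
    fun _ => preimage_mem_of_forall_idempotent_mem hup hA hp hpF
  refine exists_sum_subsystem_FS_AP_subset hp hpx (hA p hp hpF)
    (fun w => hpre _ (hldistrib w) (hldil w))
    (fun w => hpre _ (fun a b => hrdistrib a b w) (hrdil w))
    fun w₁ w₂ => hpre (fun t => w₁ * t * w₂) (fun a b => by rw [hldistrib, hrdistrib])
      fun E hE => ?_
  simpa only [image_image] using hrdil w₂ _ (hldil w₁ E hE)

/-- in a weak ring (S,+,·), if 𝓕 is a left inverse shift-invariant (for +)
and two-sided dilation-invariant Ramsey family with β(𝓕) a subsemigroup of (βS,+),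
⟨x_n⟩ is an 𝓕-minimal sequence in (S,+) and A is an essential 𝓕*-set in (S,+), then there
is a sum subsystem ⟨y_n⟩ of ⟨x_n⟩ with FS(⟨y_n⟩) ∪ AP(⟨y_n⟩) ⊆ A. -/
theorem weak_ring_F_star_additive_multiplicative {S : Type*} [AddSemigroup S] [Semigroup S]
    (hldistrib : ∀ x y z : S, x * (y + z) = x * y + x * z)
    (hrdistrib : ∀ x y z : S, (x + y) * z = x * z + y * z)
    (F : Set (Set S))
    (hne : F.Nonempty) (h0 : ∅ ∉ F)
    (hup : ∀ A ∈ F, ∀ B : Set S, A ⊆ B → B ∈ F)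
    (hram : ∀ A ∈ F, ∀ A₁ A₂ : Set S, A = A₁ ∪ A₂ → A₁ ∈ F ∨ A₂ ∈ F)
    (hinv : ∀ s : S, ∀ E ∈ F, {y : S | s + y ∈ E} ∈ F)
    (hldil : ∀ s : S, ∀ E ∈ F, (fun t => s * t) '' E ∈ F)
    (hrdil : ∀ s : S, ∀ E ∈ F, (fun t => t * s) '' E ∈ F)
    (hsub : ∀ p q : Ultrafilter S, (∀ A ∈ p, A ∈ F) → (∀ A ∈ q, A ∈ F) →
      ∀ A ∈ p + q, A ∈ F)
    (x : ℕ → S)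
    (hmin : ((⋂ m : ℕ, {p : Ultrafilter S | FSfrom x m ∈ p}) ∩
        {p : Ultrafilter S | ∀ A ∈ p, A ∈ F}).Nonempty)
    (A : Set S)
    (hA : ∀ p : Ultrafilter S, p + p = p → (∀ B ∈ p, B ∈ F) → A ∈ p) :
    ∃ (y : ℕ → S) (H : ℕ → Finset ℕ),
      (∀ n : ℕ, (H n).Nonempty) ∧
      (∀ n : ℕ, ∀ i ∈ H n, ∀ j ∈ H (n + 1), i < j) ∧
      (∀ n : ℕ, ∃ (a : ℕ) (l : List ℕ),
        (H n).sort (· ≤ ·) = a :: l ∧ y n = seqSum x a l) ∧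
      FSfrom y 0 ∪ APset y ⊆ A :=
  weak_ring_F_star_additive_multiplicative_general hldistrib hrdistrib F hup hldil hrdil hsub x hmin
    A hA
end

section
/- For a sequence ⟨x_n⟩ in a discrete semigroup (S,·), the set ⋂_{m=1}^∞ cl(FP(⟨x_n⟩_{n=m}^∞)) is a closed subsemigroup of the ultrafilter semigroup (βS,·); in particular it contains an idempotent ultrafilter, so every set containing FP(⟨x_n⟩_{n=1}^∞) is an IP set witnessed by a member of an idempotent ultrafilter. -/
/-!
Multiplying a finite product from `FP(xₘ, xₘ₊₁, …)` on the right by any finite product taken far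
enough out in the sequence stays in `FP(xₘ, xₘ₊₁, …)`. Hence, if `FP(x_k, …) ∈ q` for every `k`,
each set `FP(xₘ, …)` is `p * q`-large whenever it is `p`-large, so the intersection of the closed
sets `cl FP(xₘ, …)` is a subsemigroup of `βS`. It is a decreasing intersection of nonempty compact
sets, hence a nonempty compact subsemigroup, and Ellis's theorem gives an idempotent in it.
-/

open Filter

attribute [local instance] Ultrafilter.mul Ultrafilter.semigroup

namespace Hindman

variable {S : Type*} [Semigroup S]

def tailFPUltrafilters (x : Stream' S) : Set (Ultrafilter S) :=
  ⋂ m : ℕ, {p : Ultrafilter S | FP (x.drop m) ∈ p}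

theorem isClosed_tailFPUltrafilters (x : Stream' S) : IsClosed (tailFPUltrafilters x) :=
  isClosed_iInter fun _ => ultrafilter_isClosed_basic _

theorem FP_drop_succ_subset (x : Stream' S) (m : ℕ) : FP (x.drop (m + 1)) ⊆ FP (x.drop m) := by
  simpa only [Stream'.drop_drop, add_comm] using FP_drop_subset_FP (x.drop m) 1

theorem tailFPUltrafilters_nonempty (x : Stream' S) : (tailFPUltrafilters x).Nonempty :=
  IsCompact.nonempty_iInter_of_sequence_nonempty_isCompact_isClosed _
    (fun m _ hp => mem_of_superset hp (FP_drop_succ_subset x m))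
    (fun _ => ⟨pure _, mem_pure.mpr (FP.head _)⟩)
    (ultrafilter_isClosed_basic _).isCompact
    (fun _ => ultrafilter_isClosed_basic _)

theorem mul_mem_tailFPUltrafilters {x : Stream' S} {p q : Ultrafilter S}
    (hp : p ∈ tailFPUltrafilters x) (hq : q ∈ tailFPUltrafilters x) :
    p * q ∈ tailFPUltrafilters x := by
  simp only [tailFPUltrafilters, Set.mem_iInter, Set.mem_ofPred_eq] at hp hq ⊢
  intro m
  change ∀ᶠ s in (p * q : Ultrafilter S), s ∈ FP (x.drop m)
  rw [Ultrafilter.eventually_mul]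
  filter_upwards [hp m] with s hs
  obtain ⟨k, hk⟩ := FP.mul hs
  filter_upwards [hq (m + k)] with t ht
  exact hk t (by rwa [Stream'.drop_drop])

theorem exists_idempotent_mem_tailFPUltrafilters (x : Stream' S) :
    ∃ p : Ultrafilter S, p * p = p ∧ p ∈ tailFPUltrafilters x := by
  obtain ⟨p, hp, hpp⟩ := exists_idempotent_in_compact_subsemigroup Ultrafilter.continuous_mul_left
    _ (tailFPUltrafilters_nonempty x) (isClosed_tailFPUltrafilters x).isCompact
    (fun _ hp _ hq => mul_mem_tailFPUltrafilters hp hq)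
  exact ⟨p, hpp, hp⟩

theorem FP_mem_of_mem_tailFPUltrafilters {x : Stream' S} {p : Ultrafilter S}
    (hp : p ∈ tailFPUltrafilters x) : FP x ∈ p :=
  Set.mem_iInter.mp hp 0

end Hindman

/-- ⋂_m cl(FP(⟨x_n⟩_{n=m}^∞)) is a closed subsemigroup of (βS,·); in
particular it contains an idempotent ultrafilter, so every set containing FP(⟨x_n⟩) belongs
to an idempotent ultrafilter (together with FP(⟨x_n⟩) itself). -/
theorem FP_closed_subsemigroup_idempotent {S : Type*} [Semigroup S] (x : Stream' S) :
    IsClosed (⋂ m : ℕ, {p : Ultrafilter S | Hindman.FP (x.drop m) ∈ p}) ∧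
    (∀ p q : Ultrafilter S,
      p ∈ (⋂ m : ℕ, {p : Ultrafilter S | Hindman.FP (x.drop m) ∈ p}) →
      q ∈ (⋂ m : ℕ, {p : Ultrafilter S | Hindman.FP (x.drop m) ∈ p}) →
      p * q ∈ (⋂ m : ℕ, {p : Ultrafilter S | Hindman.FP (x.drop m) ∈ p})) ∧
    (∃ p : Ultrafilter S, p * p = p ∧
      p ∈ (⋂ m : ℕ, {p : Ultrafilter S | Hindman.FP (x.drop m) ∈ p})) ∧
    (∀ A : Set S, Hindman.FP x ⊆ A →
      ∃ p : Ultrafilter S, p * p = p ∧ Hindman.FP x ∈ p ∧ A ∈ p) := by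
  obtain ⟨p, hpp, hp⟩ := Hindman.exists_idempotent_mem_tailFPUltrafilters x
  refine ⟨Hindman.isClosed_tailFPUltrafilters x, fun _ _ => Hindman.mul_mem_tailFPUltrafilters,
    ⟨p, hpp, hp⟩, fun A hA => ?_⟩
  have hFP : Hindman.FP x ∈ p := Hindman.FP_mem_of_mem_tailFPUltrafilters hp
  exact ⟨p, hpp, hFP, mem_of_superset hFP hA⟩
end
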